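/- arXiv:2210.03934 — 6 statements merged into one kernel-verified Lean document; each statement's English description precedes it below -/
import Mathlib

section
/- For every language of correct protocols PROT and every nondeterministic finite automaton A over the protocol alphabet Γ = Γ_wr ∪ Γ_qu ∪ Γ_re, there exists a 1NB_PROT-automaton M with input alphabet Γ such that L(M) = L(A) ∩ PROT; in particular, L(A) ∩ PROT ≠ ∅ if and only if L(M) ≠ ∅. (This is the reduction of the nondeterministic regular realizability problem NREG(PROT) to the non-emptiness problem for 1NB_PROT-automata.) -/
/-! ### Finite-state transducers -/

/-- A finite-state transducer from alphabet `α` to alphabet `β`, with state type `Q`: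
an initial state, a set of accepting states, and a finite set of transitions
`(q, x, y, q')` reading `x ∈ α ∪ {ε}` and writing the word `y ∈ β*`. -/
structure FST (α β Q : Type) where
  init : Q
  accept : Set Q
  trans : Set (Q × Option α × List β × Q)
  trans_fin : trans.Finite

/-- Paths of a transducer: `T.Path q u v q'` holds iff some sequence of transitions
leads from `q` to `q'` with input labels concatenating to `u` and output labels
concatenating to `v`. -/
inductive FST.Path {α β Q : Type} (T : FST α β Q) : Q → List α → List β → Q → Prop
  | refl (q : Q) : FST.Path T q [] [] q
  | step {q q' q'' : Q} {x : Option α} {y : List β} {u : List α} {v : List β} :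
      (q, x, y, q') ∈ T.trans → FST.Path T q' u v q'' →
      FST.Path T q (x.toList ++ u) (y ++ v) q''

/-- The relation computed by a transducer. -/
def FST.Rel {α β Q : Type} (T : FST α β Q) (u : List α) (v : List β) : Prop :=
  ∃ f ∈ T.accept, T.Path T.init u v f

/-- The image `T(B)` of a language under the relation computed by a transducer. -/
def FST.Img {α β Q : Type} (T : FST α β Q) (B : Set (List α)) : Set (List β) :=
  {v | ∃ u ∈ B, T.Rel u v}

/-- A transducer is deterministic if, for each state `q`, the transitions leaving `q`
either consist of a single transition with input label `ε`, or all have pairwise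
distinct input labels, none of which is `ε`. -/
def FST.Det {α β Q : Type} (T : FST α β Q) : Prop :=
  ∀ q : Q,
    (∃ t ∈ T.trans, t.1 = q ∧ t.2.1 = (none : Option α) ∧
        ∀ t' ∈ T.trans, t'.1 = q → t' = t) ∨
    ((∀ t ∈ T.trans, t.1 = q → t.2.1 ≠ none) ∧
      ∀ t ∈ T.trans, ∀ t' ∈ T.trans, t.1 = q → t'.1 = q → t.2.1 = t'.2.1 → t = t')

/-- Rational dominance: `RatDom A B` iff `A = T(B)` for some finite-state transducer. -/
def RatDom {α β : Type} (A : Set (List α)) (B : Set (List β)) : Prop :=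
  ∃ (n : ℕ) (T : FST β α (Fin n)), T.Img B = A

/-! ### Protocols -/

/-- The protocol alphabet `Γ_wr ∪ Γ_qu ∪ Γ_re` (disjoint union). -/
abbrev PLet (W Q R : Type) := W ⊕ Q ⊕ R

def wrLet {W Q R : Type} (w : W) : PLet W Q R := Sum.inl w
def quLet {W Q R : Type} (q : Q) : PLet W Q R := Sum.inr (Sum.inl q)
def reLet {W Q R : Type} (r : R) : PLet W Q R := Sum.inr (Sum.inr r)

/-- The query block `u q r`. -/
def pblock {W Q R : Type} (u : List W) (q : Q) (r : R) : List (PLet W Q R) :=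
  u.map wrLet ++ [quLet q, reLet r]

/-- A word over the protocol alphabet is a protocol (w.r.t. the validity
relation `valid`) iff it is a concatenation of query blocks `uᵢqᵢrᵢ` with
`valid qᵢ rᵢ`. -/
inductive IsProtocol {W Q R : Type} (valid : Q → R → Prop) : List (PLet W Q R) → Prop
  | nil : IsProtocol valid []
  | block (u : List W) (q : Q) (r : R) (p : List (PLet W Q R)) :
      valid q r → IsProtocol valid p → IsProtocol valid (pblock u q r ++ p)

/-- A language of correct protocols over the alphabets `W = Γ_wr`, `Q = Γ_qu`,
`R = Γ_re`, satisfying axioms (i)-(v). -/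
structure ProtLang (W Q R : Type) where
  valid : Q → R → Prop
  prot : Set (List (PLet W Q R))
  /-- (i) the empty protocol is correct -/
  empty_mem : [] ∈ prot
  /-- (ii) every member is a protocol -/
  mem_protocol : ∀ p ∈ prot, IsProtocol valid p
  /-- (iii) closure under protocol prefixes -/
  prefix_mem : ∀ p₁ p₂ : List (PLet W Q R), p₁ ++ p₂ ∈ prot → IsProtocol valid p₁ → p₁ ∈ prot
  /-- (iv) every query has some valid response extending the protocol -/
  extend : ∀ p ∈ prot, ∀ (u : List W) (q : Q), ∃ r : R, p ++ pblock u q r ∈ prot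
  /-- (v) the response to a query is uniquely determined -/
  resp_unique : ∀ (p : List (PLet W Q R)) (u : List W) (q : Q) (r r' : R)
      (s : List (PLet W Q R)),
      p ++ pblock u q r ∈ prot → p ++ pblock u q r' ++ s ∈ prot → r' = r

/-! ### Automata with an auxiliary data structure -/

/-- Input-tape letters: input letters plus the two endmarkers. -/
inductive EndM (σ : Type) where
  | lt : σ → EndM σ
  | lmark : EndM σ
  | rmark : EndM σ

/-- The input tape `⊢ w ⊣`. -/
def tape {σ : Type} (w : List σ) : List (EndM σ) :=
  EndM.lmark :: (w.map EndM.lt ++ [EndM.rmark])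

/-- A one-way automaton equipped with an auxiliary data structure
(a `1NB_PROT`-automaton), over input alphabet `σ`, with state type `S`
split into writing states (`isWr`) and query states (`¬ isWr`). -/
structure ProtAut (σ W Q R S : Type) where
  isWr : S → Prop
  s₀ : S
  F : Set S
  s₀_not_F : s₀ ∉ F
  transWr : Set (S × Option (EndM σ) × List W × S)
  transQu : Set (S × Q × R × S)
  wr_src : ∀ t ∈ transWr, isWr t.1
  qu_src : ∀ t ∈ transQu, ¬ isWr t.1
  qu_tgt : ∀ t ∈ transQu, isWr t.2.2.2
  transWr_fin : transWr.Finite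

/-- Configurations `(s, v, u, p)`: state, unprocessed input, query tape, protocol. -/
abbrev PConfig (σ W Q R S : Type) := S × List (EndM σ) × List W × List (PLet W Q R)

/-- The move relation of an automaton with an ADS, relative to the language `P`
of correct protocols. -/
inductive ProtStep {σ W Q R S : Type} (M : ProtAut σ W Q R S)
    (P : Set (List (PLet W Q R))) : PConfig σ W Q R S → PConfig σ W Q R S → Prop
  | wr {s s' : S} {a : Option (EndM σ)} {x : List W} {v : List (EndM σ)}
      {u : List W} {p : List (PLet W Q R)} :
      (s, a, x, s') ∈ M.transWr →
      ProtStep M P (s, a.toList ++ v, u, p) (s', v, u ++ x, p)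
  | qu {s s' : S} {q : Q} {r : R} {v : List (EndM σ)} {u : List W}
      {p : List (PLet W Q R)} :
      (s, q, r, s') ∈ M.transQu → p ++ pblock u q r ∈ P →
      ProtStep M P (s, v, u, p) (s', v, [], p ++ pblock u q r)

/-- `M` has an accepting run on `w` that produces the protocol `p`. -/
def ProtAut.AcceptsWith {σ W Q R S : Type} (M : ProtAut σ W Q R S)
    (P : Set (List (PLet W Q R))) (w : List σ) (p : List (PLet W Q R)) : Prop :=
  ∃ sf ∈ M.F,
    Relation.ReflTransGen (ProtStep M P) (M.s₀, tape w, [], []) (sf, [], [], p)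

/-- `M` accepts the word `w`. -/
def ProtAut.Accepts {σ W Q R S : Type} (M : ProtAut σ W Q R S)
    (P : Set (List (PLet W Q R))) (w : List σ) : Prop :=
  ∃ p ∈ P, M.AcceptsWith P w p

/-- The language accepted by `M`. -/
def ProtAut.Lang {σ W Q R S : Type} (M : ProtAut σ W Q R S)
    (P : Set (List (PLet W Q R))) : Set (List σ) :=
  {w | M.Accepts P w}

/-- `M` is deterministic: each configuration has at most one successor. -/
def ProtAut.Deterministic {σ W Q R S : Type} (M : ProtAut σ W Q R S)
    (P : Set (List (PLet W Q R))) : Prop :=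
  ∀ c c₁ c₂ : PConfig σ W Q R S, ProtStep M P c c₁ → ProtStep M P c c₂ → c₁ = c₂

/-- The class of languages over `σ` accepted by `1NB_PROT`-automata. -/
def ProtCL {W Q R : Type} (P : ProtLang W Q R) (σ : Type) : Set (Set (List σ)) :=
  {L | ∃ (n : ℕ) (M : ProtAut σ W Q R (Fin n)), L = M.Lang P.prot}

/-- The class of languages over `σ` accepted by deterministic `1DB_PROT`-automata. -/
def ProtCLdet {W Q R : Type} (P : ProtLang W Q R) (σ : Type) : Set (Set (List σ)) :=
  {L | ∃ (n : ℕ) (M : ProtAut σ W Q R (Fin n)),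
    M.Deterministic P.prot ∧ L = M.Lang P.prot}

/-! ### Concatenation and Kleene star of languages -/

def LangConcat {σ : Type} (L₁ L₂ : Set (List σ)) : Set (List σ) :=
  {w | ∃ u ∈ L₁, ∃ v ∈ L₂, w = u ++ v}

def LangStar {σ : Type} (L : Set (List σ)) : Set (List σ) :=
  {w | ∃ ws : List (List σ), (∀ u ∈ ws, u ∈ L) ∧ w = ws.flatten}

/-!
The automaton runs the NFA on its input while copying write letters onto the query tape. On a
query letter `q` followed by a response letter `r` it asks the query `q` with the answer `r` it
has just read, which is allowed only if the protocol extended by this block is correct. Hence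
the protocol built by an accepting run is the input word itself, and it lies in `PROT`.
Conversely a word of `PROT` is a sequence of blocks whose prefixes are correct protocols by
axiom (iii), so every such word accepted by `A` can be read block by block.
-/

theorem IsProtocol.append {W Q R : Type} {valid : Q → R → Prop} {p p' : List (PLet W Q R)}
    (hp : IsProtocol valid p) (hp' : IsProtocol valid p') : IsProtocol valid (p ++ p') := by
  induction hp with
  | nil => exact hp'
  | block u q r p hqr _ ih => rw [List.append_assoc]; exact .block u q r _ hqr ih

theorem isProtocol_pblock {W Q R : Type} {valid : Q → R → Prop} (u : List W) {q : Q} {r : R}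
    (hqr : valid q r) : IsProtocol valid (pblock u q r) := by
  simpa using IsProtocol.block u q r [] hqr .nil

instance {σ : Type} [Finite σ] : Finite (EndM σ) :=
  Finite.of_surjective (fun o : Option (Option σ) => o.elim .lmark (Option.elim · .rmark .lt))
    (by rintro (a | _ | _) <;> [exact ⟨some (some a), rfl⟩; exact ⟨none, rfl⟩;
      exact ⟨some none, rfl⟩])

theorem map_lt_append_rmark_eq_lt_cons {σ : Type} {w : List σ} {a : σ} {v : List (EndM σ)} :
    w.map EndM.lt ++ [EndM.rmark] = EndM.lt a :: v ↔
      ∃ w', w = a :: w' ∧ v = w'.map EndM.lt ++ [EndM.rmark] := by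
  cases w <;> simp [eq_comm]

theorem map_lt_append_rmark_eq_rmark_cons {σ : Type} {w : List σ} {v : List (EndM σ)} :
    w.map EndM.lt ++ [EndM.rmark] = EndM.rmark :: v ↔ w = [] ∧ v = [] := by
  cases w <;> simp [eq_comm]

namespace ProtAut

variable {σ W Q R S T : Type}

def relabel (M : ProtAut σ W Q R S) (e : S ≃ T) : ProtAut σ W Q R T where
  isWr t := M.isWr (e.symm t)
  s₀ := e M.s₀
  F := e.symm ⁻¹' M.F
  s₀_not_F := by simpa using M.s₀_not_F
  transWr := {t | (e.symm t.1, t.2.1, t.2.2.1, e.symm t.2.2.2) ∈ M.transWr}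
  transQu := {t | (e.symm t.1, t.2.1, t.2.2.1, e.symm t.2.2.2) ∈ M.transQu}
  wr_src t ht := M.wr_src _ ht
  qu_src t ht := M.qu_src _ ht
  qu_tgt t ht := M.qu_tgt _ ht
  transWr_fin := M.transWr_fin.preimage
    (e.symm.prodCongr ((Equiv.refl _).prodCongr ((Equiv.refl _).prodCongr e.symm))).injective.injOn

variable {M : ProtAut σ W Q R S} {e : S ≃ T} {P : Set (List (PLet W Q R))}

theorem protStep_relabel {c c' : PConfig σ W Q R S} (h : ProtStep M P c c') :
    ProtStep (M.relabel e) P (e c.1, c.2) (e c'.1, c'.2) := by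
  cases h with
  | wr hmem => exact .wr (by simpa [relabel] using hmem)
  | qu hmem hp => exact .qu (by simpa [relabel] using hmem) hp

theorem protStep_of_relabel {c c' : PConfig σ W Q R T} (h : ProtStep (M.relabel e) P c c') :
    ProtStep M P (e.symm c.1, c.2) (e.symm c'.1, c'.2) := by
  cases h with
  | wr hmem => exact .wr hmem
  | qu hmem hp => exact .qu hmem hp

theorem lang_relabel (M : ProtAut σ W Q R S) (e : S ≃ T) (P : Set (List (PLet W Q R))) :
    (M.relabel e).Lang P = M.Lang P := by
  ext w
  constructor
  · rintro ⟨p, hp, sf, hsf, hrun⟩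
    refine ⟨p, hp, e.symm sf, hsf, ?_⟩
    simpa [relabel, Function.onFun] using
      hrun.lift (fun c => (e.symm c.1, c.2)) fun _ _ => protStep_of_relabel
  · rintro ⟨p, hp, sf, hsf, hrun⟩
    refine ⟨p, hp, e sf, by simpa [relabel] using hsf, ?_⟩
    simpa [relabel] using hrun.lift (fun c => (e c.1, c.2)) fun _ _ => protStep_relabel

end ProtAut

/-- How much of the current query block `u q r` has been read beyond its write letters. -/
inductive BlockPos (Q R : Type)
  | idle
  | queried (q : Q)
  | answered (q : Q) (r : R)
  deriving Fintype

namespace BlockPos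

variable {W Q R : Type}

def pending : BlockPos Q R → List (PLet W Q R)
  | idle => []
  | queried q => [quLet q]
  | answered q r => [quLet q, reLet r]

def next : BlockPos Q R → PLet W Q R → Option (BlockPos Q R)
  | idle, .inl _ => some idle
  | idle, .inr (.inl q) => some (queried q)
  | queried q, .inr (.inr r) => some (answered q r)
  | _, _ => none

end BlockPos

def wrPart {W Q R : Type} : PLet W Q R → List W
  | .inl w => [w]
  | .inr _ => []

@[simp]
theorem wrPart_wrLet {W Q R : Type} (w : W) : wrPart (wrLet w : PLet W Q R) = [w] := rfl

@[simp]
theorem wrPart_quLet {W Q R : Type} (q : Q) : wrPart (quLet q : PLet W Q R) = [] := rfl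

@[simp]
theorem wrPart_reLet {W Q R : Type} (r : R) : wrPart (reLet r : PLet W Q R) = [] := rfl

theorem BlockPos.pending_next {W Q R : Type} {b b' : BlockPos Q R} {a : PLet W Q R}
    (h : b.next a = some b') (u : List W) :
    u.map wrLet ++ b.pending ++ [a] = (u ++ wrPart a).map wrLet ++ b'.pending := by
  rcases b with _ | q | ⟨q, r⟩ <;> rcases a with w | q' | r' <;>
    simp only [next, reduceCtorEq, Option.some.injEq] at h <;> subst h <;>
    simp [pending, wrPart, wrLet, quLet, reLet]

inductive SimState (S Q R : Type)
  | init
  | sim (s : S) (b : BlockPos Q R)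
  | fin
  deriving Fintype

def SimState.IsWriting {S Q R : Type} : SimState S Q R → Prop
  | sim _ (.answered _ _) => False
  | _ => True

theorem SimState.isWriting_sim_of_next_eq_some {W S Q R : Type} {s : S} {b b' : BlockPos Q R}
    {a : PLet W Q R} (h : b.next a = some b') : (SimState.sim s b).IsWriting := by
  rcases b with _ | _ | _ <;> simp_all [IsWriting, BlockPos.next]

namespace NFA

theorem mem_evalFrom_append {α σ : Type} {M : NFA α σ} {S : Set σ} {t : σ} {x y : List α} :
    t ∈ M.evalFrom S (x ++ y) ↔ ∃ m ∈ M.evalFrom S x, t ∈ M.evalFrom {m} y := by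
  rw [evalFrom_append, mem_evalFrom_iff_exists]

theorem mem_evalFrom_cons {α σ : Type} {M : NFA α σ} {s t : σ} {a : α} {x : List α} :
    t ∈ M.evalFrom {s} (a :: x) ↔ ∃ s' ∈ M.step s a, t ∈ M.evalFrom {s'} x := by
  rw [evalFrom_cons, stepSet_singleton, mem_evalFrom_iff_exists]

variable {W Q R S : Type}

inductive SimWr (A : NFA (PLet W Q R) S) :
    SimState S Q R → Option (EndM (PLet W Q R)) → List W → SimState S Q R → Prop
  | start {s : S} : s ∈ A.start → SimWr A .init (some .lmark) [] (.sim s .idle)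
  | read {s s' : S} {b b' : BlockPos Q R} {a : PLet W Q R} :
      s' ∈ A.step s a → b.next a = some b' →
      SimWr A (.sim s b) (some (.lt a)) (wrPart a) (.sim s' b')
  | accept {s : S} : s ∈ A.accept → SimWr A (.sim s .idle) (some .rmark) [] .fin

inductive SimQu : SimState S Q R → Q → R → SimState S Q R → Prop
  | ask (s : S) (q : Q) (r : R) : SimQu (.sim s (.answered q r)) q r (.sim s .idle)

def toProtAut [Fintype W] [Fintype Q] [Fintype R] [Fintype S] (A : NFA (PLet W Q R) S) :
    ProtAut (PLet W Q R) W Q R (SimState S Q R) where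
  isWr := SimState.IsWriting
  s₀ := .init
  F := {.fin}
  s₀_not_F := nofun
  transWr := {t | SimWr A t.1 t.2.1 t.2.2.1 t.2.2.2}
  transQu := {t | SimQu t.1 t.2.1 t.2.2.1 t.2.2.2}
  wr_src := by
    rintro ⟨m, a, x, m'⟩ (h : SimWr A m a x m')
    rcases h with _ | ⟨_, hb⟩ | _
    exacts [trivial, SimState.isWriting_sim_of_next_eq_some hb, trivial]
  qu_src := by rintro ⟨m, q, r, m'⟩ (⟨⟩ : SimQu m q r m'); exact id
  qu_tgt := by rintro ⟨m, q, r, m'⟩ (⟨⟩ : SimQu m q r m'); trivial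
  transWr_fin := by
    refine (Set.finite_univ.prod <| Set.finite_univ.prod <|
      ((Set.finite_range (wrPart (Q := Q) (R := R))).insert []).prod Set.finite_univ).subset ?_
    rintro ⟨m, a, x, m'⟩ (h : SimWr A m a x m')
    rcases h with _ | _ | _ <;> simp

variable [Fintype W] [Fintype Q] [Fintype R] [Fintype S] (A : NFA (PLet W Q R) S)

def RunInv (w : List (PLet W Q R)) : PConfig (PLet W Q R) W Q R (SimState S Q R) → Prop
  | (.init, v, u, p) => v = tape w ∧ u = [] ∧ p = []
  | (.sim s b, v, u, p) => ∃ w₂, v = w₂.map EndM.lt ++ [EndM.rmark] ∧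
      w = p ++ u.map wrLet ++ b.pending ++ w₂ ∧
      s ∈ A.evalFrom A.start (p ++ u.map wrLet ++ b.pending)
  | (.fin, v, u, p) => v = [] ∧ w = p ++ u.map wrLet ∧ w ∈ A.accepts

theorem runInv_of_protStep {P : Set (List (PLet W Q R))} {w : List (PLet W Q R)}
    {c c' : PConfig (PLet W Q R) W Q R (SimState S Q R)}
    (hc : RunInv A w c) (h : ProtStep A.toProtAut P c c') : RunInv A w c' := by
  cases h with
  | @wr _ _ a x v' u p hmem =>
    change SimWr A _ a x _ at hmem
    cases hmem with
    | start hs =>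
      obtain ⟨hv, rfl, rfl⟩ := hc
      refine ⟨w, by simpa [tape, eq_comm] using hv, by simp [BlockPos.pending], ?_⟩
      simpa [BlockPos.pending] using hs
    | @read s s' b b' a hs hb =>
      obtain ⟨w₂, hv, rfl, hev⟩ := hc
      obtain ⟨w₂, rfl, rfl⟩ := map_lt_append_rmark_eq_lt_cons.mp hv.symm
      have hread : p ++ u.map wrLet ++ b.pending ++ [a] =
          p ++ (u ++ wrPart a).map wrLet ++ b'.pending := by
        simpa only [List.append_assoc] using congrArg (p ++ ·) (b.pending_next hb u)
      refine ⟨w₂, rfl, by rw [← hread, List.append_assoc _ [a]]; rfl, ?_⟩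
      rw [← hread, evalFrom_append, evalFrom_singleton, mem_stepSet]
      exact ⟨s, hev, hs⟩
    | accept hs =>
      obtain ⟨w₂, hv, rfl, hev⟩ := hc
      obtain ⟨rfl, rfl⟩ := map_lt_append_rmark_eq_rmark_cons.mp hv.symm
      simp only [BlockPos.pending, List.append_nil] at hev ⊢
      exact ⟨rfl, rfl, mem_accepts.mpr ⟨_, hs, hev⟩⟩
  | @qu _ _ q r v u p hmem _ =>
    change SimQu _ q r _ at hmem
    cases hmem
    simpa [RunInv, BlockPos.pending, pblock] using hc

theorem runInv_of_reflTransGen {P : Set (List (PLet W Q R))} {w : List (PLet W Q R)}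
    {c c' : PConfig (PLet W Q R) W Q R (SimState S Q R)}
    (h : Relation.ReflTransGen (ProtStep A.toProtAut P) c c') (hc : RunInv A w c) :
    RunInv A w c' := by
  induction h with
  | refl => exact hc
  | tail _ h ih => exact runInv_of_protStep A ih h

theorem mem_of_mem_lang_toProtAut {P : Set (List (PLet W Q R))} {w : List (PLet W Q R)}
    (hw : w ∈ A.toProtAut.Lang P) : w ∈ A.accepts ∧ w ∈ P := by
  obtain ⟨p, hp, sf, rfl, hrun⟩ := hw
  obtain ⟨-, rfl, hacc⟩ := runInv_of_reflTransGen A hrun ⟨rfl, rfl, rfl⟩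
  simpa using And.intro hacc hp

variable {v : List (EndM (PLet W Q R))}

theorem protStep_toProtAut_read {P : Set (List (PLet W Q R))} {s s' : S} {b b' : BlockPos Q R}
    {a : PLet W Q R} {u : List W} {p : List (PLet W Q R)} (hs : s' ∈ A.step s a)
    (hb : b.next a = some b') :
    ProtStep A.toProtAut P (.sim s b, .lt a :: v, u, p) (.sim s' b', v, u ++ wrPart a, p) :=
  .wr (a := some (.lt a)) (SimWr.read hs hb)

theorem reflTransGen_toProtAut_writes {P : Set (List (PLet W Q R))} {u' : List W} {s t : S}
    {u : List W} {p : List (PLet W Q R)} (ht : t ∈ A.evalFrom {s} (u'.map wrLet)) :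
    Relation.ReflTransGen (ProtStep A.toProtAut P)
      (.sim s .idle, (u'.map wrLet).map EndM.lt ++ v, u, p) (.sim t .idle, v, u ++ u', p) := by
  induction u' generalizing s u with
  | nil =>
    obtain rfl : t = s := by simpa using ht
    simpa using .refl
  | cons a u' ih =>
    obtain ⟨s', hs', ht⟩ := mem_evalFrom_cons.mp ht
    exact .head (protStep_toProtAut_read A hs' rfl) (by simpa using ih (u := u ++ [a]) ht)

theorem reflTransGen_toProtAut_pblock {P : Set (List (PLet W Q R))} {u : List W} {q : Q} {r : R}
    {s t : S} {p : List (PLet W Q R)} (ht : t ∈ A.evalFrom {s} (pblock u q r))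
    (hp : p ++ pblock u q r ∈ P) :
    Relation.ReflTransGen (ProtStep A.toProtAut P)
      (.sim s .idle, (pblock u q r).map EndM.lt ++ v, [], p)
      (.sim t .idle, v, [], p ++ pblock u q r) := by
  obtain ⟨s₁, hs₁, ht⟩ := mem_evalFrom_append.mp ht
  obtain ⟨s₂, hs₂, ht⟩ := mem_evalFrom_cons.mp ht
  obtain ⟨s₃, hs₃, ht⟩ := mem_evalFrom_cons.mp ht
  obtain rfl : t = s₃ := by simpa using ht
  have hwrites := reflTransGen_toProtAut_writes A (P := P) (u := []) (p := p)
    (v := .lt (quLet q) :: .lt (reLet r) :: v) hs₁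
  have hquery : ProtStep A.toProtAut P
      (.sim t (.answered q r), v, u, p) (.sim t .idle, v, [], p ++ pblock u q r) :=
    .qu (SimQu.ask t q r) hp
  have hread_q := protStep_toProtAut_read A (P := P) (u := u) (p := p)
    (v := .lt (reLet r) :: v) (b := .idle) hs₂ rfl
  have hread_r := protStep_toProtAut_read A (P := P) (u := u) (p := p) (v := v)
    (b := .queried q) hs₃ rfl
  simp only [wrPart_quLet, wrPart_reLet, List.append_nil] at hread_q hread_r
  simp only [pblock, List.map_append, List.append_assoc, List.map_cons, List.map_nil,
    List.nil_append, List.cons_append] at hwrites ⊢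
  exact hwrites.tail hread_q |>.tail hread_r |>.tail hquery

theorem reflTransGen_toProtAut_protocol (P : ProtLang W Q R) {p₂ : List (PLet W Q R)}
    (hp₂ : IsProtocol P.valid p₂) {p₁ : List (PLet W Q R)} (hp₁ : IsProtocol P.valid p₁)
    (hp : p₁ ++ p₂ ∈ P.prot) {s t : S} (ht : t ∈ A.evalFrom {s} p₂) :
    Relation.ReflTransGen (ProtStep A.toProtAut P.prot)
      (.sim s .idle, p₂.map EndM.lt ++ v, [], p₁) (.sim t .idle, v, [], p₁ ++ p₂) := by
  induction hp₂ generalizing p₁ s with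
  | nil =>
    obtain rfl : t = s := by simpa using ht
    simpa using .refl
  | block u q r p₂ hqr _ ih =>
    obtain ⟨s', hs', ht⟩ := mem_evalFrom_append.mp ht
    have hblock : IsProtocol P.valid (p₁ ++ pblock u q r) :=
      hp₁.append (isProtocol_pblock u hqr)
    rw [← List.append_assoc] at hp
    have hrest := ih hblock hp ht
    rw [List.map_append, List.append_assoc, ← List.append_assoc p₁]
    exact (reflTransGen_toProtAut_pblock A hs' (P.prefix_mem _ _ hp hblock)).trans hrest

theorem mem_lang_toProtAut (P : ProtLang W Q R) {w : List (PLet W Q R)} (hA : w ∈ A.accepts)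
    (hP : w ∈ P.prot) :
    w ∈ A.toProtAut.Lang P.prot := by
  obtain ⟨t, ht_acc, ht⟩ := mem_accepts.mp hA
  obtain ⟨s, hs, ht⟩ := mem_evalFrom_iff_exists.mp ht
  have hstart : ProtStep A.toProtAut P.prot (.init, tape w, [], [])
      (.sim s .idle, w.map EndM.lt ++ [.rmark], [], []) :=
    .wr (a := some .lmark) (SimWr.start hs)
  have hfinish : ProtStep A.toProtAut P.prot (.sim t .idle, [.rmark], [], w) (.fin, [], [], w) :=
    .wr (a := some .rmark) (SimWr.accept ht_acc)
  refine ⟨w, hP, .fin, rfl, .head hstart (.tail ?_ hfinish)⟩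
  simpa using reflTransGen_toProtAut_protocol A P (P.mem_protocol w hP) .nil (by simpa) ht

theorem lang_toProtAut (P : ProtLang W Q R) :
    A.toProtAut.Lang P.prot = {p | p ∈ A.accepts} ∩ P.prot :=
  Set.ext fun _ => ⟨mem_of_mem_lang_toProtAut A, fun h => mem_lang_toProtAut A P h.1 h.2⟩

end NFA

theorem stmt2_general {W Q R : Type} [Fintype W] [Fintype Q] [Fintype R]
    (P : ProtLang W Q R) {S : Type} [Fintype S] (A : NFA (PLet W Q R) S) :
    ∃ (n : ℕ) (M : ProtAut (PLet W Q R) W Q R (Fin n)),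
      M.Lang P.prot = {p | p ∈ A.accepts} ∩ P.prot ∧
      ((∃ p, p ∈ A.accepts ∧ p ∈ P.prot) ↔ (M.Lang P.prot).Nonempty) := by
  have hlang : (A.toProtAut.relabel (Fintype.equivFin _)).Lang P.prot =
      {p | p ∈ A.accepts} ∩ P.prot := by
    rw [ProtAut.lang_relabel, NFA.lang_toProtAut]
  exact ⟨_, _, hlang, by rw [hlang]; rfl⟩

/-- For every language of correct protocols `PROT` and every NFA `A`
over the protocol alphabet, there is a `1NB_PROT`-automaton `M` with input alphabet the
protocol alphabet such that `L(M) = L(A) ∩ PROT`; in particular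
`L(A) ∩ PROT ≠ ∅ ↔ L(M) ≠ ∅`. -/
theorem stmt2 {W Q R : Type} [Fintype W] [Fintype Q] [Fintype R]
    [Nonempty Q] [Nonempty R]
    (P : ProtLang W Q R) {S : Type} [Fintype S] (A : NFA (PLet W Q R) S) :
    ∃ (n : ℕ) (M : ProtAut (PLet W Q R) W Q R (Fin n)),
      M.Lang P.prot = {p | p ∈ A.accepts} ∩ P.prot ∧
      ((∃ p, p ∈ A.accepts ∧ p ∈ P.prot) ↔ (M.Lang P.prot).Nonempty) :=
  stmt2_general P A
end

section
/- Let PROT be a language of correct protocols and M a 1NB_PROT-automaton over input alphabet Σ. Then there exists a finite-state transducer T_M from Σ to the protocol alphabet Γ = Γ_wr ∪ Γ_qu ∪ Γ_re (the extractor of protocols) such that: (1) for every w ∈ Σ*, w ∈ L(M) if and only if T_M(w) ∩ PROT ≠ ∅; and (2) for every p ∈ PROT, p ∈ T_M(w) if and only if M has an accepting run on w producing the protocol p, i.e., (s₀, ⊢w⊣, ε, ε) ⊢* (s_f, ε, ε, p) for some s_f ∈ F. -/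
/-! The extractor simulates `M` on states `S × Fin 3`, the phase recording whether `⊢` is still
to be read (0), the input is being read (1), or `⊣` has been read (2). It outputs the letters `M`
writes on its query tape and, for a query transition `(s, q, r, s')`, the letters `q r`, guessing
the response. On an output that is a correct protocol every guess is right: by axioms (iv) and
(v), a correct protocol `p u q r ⋯` has as `r` the one response with `p u q r ∈ PROT`. What has
been output is always the protocol followed by the query tape, and a protocol cannot end in a
write letter, so an output in `PROT` comes from a run ending with an empty query tape. -/

namespace FST

variable {α β Q₀ Q₁ : Type}

def mapEquiv (T : FST α β Q₀) (e : Q₀ ≃ Q₁) : FST α β Q₁ where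
  init := e T.init
  accept := e.symm ⁻¹' T.accept
  trans := (fun t => (e t.1, t.2.1, t.2.2.1, e t.2.2.2)) '' T.trans
  trans_fin := T.trans_fin.image _

theorem Path.mapEquiv {T : FST α β Q₀} (e : Q₀ ≃ Q₁) {q q' : Q₀} {u : List α}
    {v : List β} (h : T.Path q u v q') : (T.mapEquiv e).Path (e q) u v (e q') := by
  induction h with
  | refl q => exact .refl _
  | step ht _ ih => exact .step ⟨_, ht, rfl⟩ ih

theorem Path.of_mapEquiv {T : FST α β Q₀} {e : Q₀ ≃ Q₁} {q q' : Q₁} {u : List α}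
    {v : List β} (h : (T.mapEquiv e).Path q u v q') : T.Path (e.symm q) u v (e.symm q') := by
  induction h with
  | refl q => exact .refl _
  | step ht _ ih =>
    obtain ⟨⟨_, _, _, _⟩, ht, heq⟩ := ht
    cases heq
    simpa using Path.step ht (by simpa using ih)

theorem rel_mapEquiv (T : FST α β Q₀) (e : Q₀ ≃ Q₁) : (T.mapEquiv e).Rel = T.Rel := by
  ext u v
  constructor
  · rintro ⟨f, hf, hp⟩
    exact ⟨e.symm f, hf, by simpa [mapEquiv] using hp.of_mapEquiv⟩
  · rintro ⟨f, hf, hp⟩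
    exact ⟨e f, by simpa [mapEquiv] using hf, hp.mapEquiv e⟩

theorem exists_fin_rel_eq [Finite Q₀] (T : FST α β Q₀) :
    ∃ (m : ℕ) (T' : FST α β (Fin m)), T'.Rel = T.Rel := by
  obtain ⟨m, ⟨e⟩⟩ := Finite.exists_equiv_fin Q₀
  exact ⟨m, T.mapEquiv e, T.rel_mapEquiv e⟩

end FST

section Protocols

variable {W Q R : Type}

theorem IsProtocol.getLast?_ne_wrLet {valid : Q → R → Prop} {p : List (PLet W Q R)}
    (h : IsProtocol valid p) (a : W) : p.getLast? ≠ some (wrLet a) := by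
  induction h with
  | nil => simp
  | block u q r p _ _ ih =>
    rw [List.getLast?_append]
    cases hp : p.getLast? <;> simp_all [pblock, wrLet, reLet]

theorem IsProtocol.eq_nil_of_append_map_wrLet {valid : Q → R → Prop}
    {p : List (PLet W Q R)} {u : List W} (h : IsProtocol valid (p ++ u.map wrLet)) :
    u = [] := by
  rcases List.eq_nil_or_concat u with rfl | ⟨u, a, rfl⟩
  · rfl
  · exact absurd (by simp) (h.getLast?_ne_wrLet a)

theorem ProtLang.append_pblock_mem (P : ProtLang W Q R) {p s : List (PLet W Q R)}
    {u : List W} {q : Q} {r : R} (hp : p ∈ P.prot) (h : p ++ pblock u q r ++ s ∈ P.prot) :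
    p ++ pblock u q r ∈ P.prot := by
  obtain ⟨r₀, hr₀⟩ := P.extend p hp u q
  rwa [P.resp_unique p u q r₀ r s hr₀ h]

end Protocols

section Tape

variable {σ : Type}

/-- The unread part of `⊢ w ⊣` in phase `ph`, where `w` is the unread input; in phase 2, `w` is
meant to be empty. -/
def tapeRest : Fin 3 → List σ → List (EndM σ)
  | 0, w => tape w
  | 1, w => w.map EndM.lt ++ [EndM.rmark]
  | 2, _ => []

inductive TapeMove : Fin 3 → Option (EndM σ) → Option σ → Fin 3 → Prop
  | eps (ph : Fin 3) : TapeMove ph none none ph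
  | lmark : TapeMove 0 (some .lmark) none 1
  | letter (a : σ) : TapeMove 1 (some (.lt a)) (some a) 1
  | rmark : TapeMove 1 (some .rmark) none 2

def EndM.letter? : EndM σ → Option σ
  | .lt a => some a
  | _ => none

theorem TapeMove.eq_bind_letter? {ph ph' : Fin 3} {a : Option (EndM σ)} {x : Option σ}
    (h : TapeMove ph a x ph') : x = a.bind EndM.letter? := by
  cases h <;> rfl

theorem TapeMove.of_phase_two {ph' : Fin 3} {a : Option (EndM σ)} {x : Option σ}
    (h : TapeMove 2 a x ph') : x = none ∧ ph' = 2 := by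
  cases h
  exact ⟨rfl, rfl⟩

theorem TapeMove.tapeRest_append {ph ph' : Fin 3} {a : Option (EndM σ)} {x : Option σ}
    {w : List σ} (h : TapeMove ph a x ph') (hw : ph' = 2 → w = []) :
    tapeRest ph (x.toList ++ w) = a.toList ++ tapeRest ph' w := by
  cases h with
  | rmark => obtain rfl := hw rfl; rfl
  | _ => simp [tapeRest, tape]

theorem exists_tapeMove_of_tapeRest_eq {ph : Fin 3} {w : List σ} {a : Option (EndM σ)}
    {v : List (EndM σ)} (hw : ph = 2 → w = []) (h : tapeRest ph w = a.toList ++ v) :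
    ∃ x ph' w', TapeMove ph a x ph' ∧ w = x.toList ++ w' ∧ v = tapeRest ph' w' ∧
      (ph' = 2 → w' = []) := by
  rcases a with _ | e
  · exact ⟨none, ph, w, .eps ph, rfl, by simpa using h.symm, hw⟩
  fin_cases ph
  · simp only [tapeRest, tape, Option.toList_some, List.singleton_append, List.cons.injEq] at h
    obtain ⟨rfl, rfl⟩ := h
    exact ⟨none, 1, w, .lmark, rfl, rfl, fun h => absurd h (by decide)⟩
  · rcases w with _ | ⟨c, w⟩ <;>
      simp only [tapeRest, List.map_nil, List.map_cons, List.nil_append, List.cons_append,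
        Option.toList_some, List.cons.injEq] at h <;>
      obtain ⟨rfl, rfl⟩ := h
    · exact ⟨none, 2, [], .rmark, rfl, rfl, fun _ => rfl⟩
    · exact ⟨some c, 1, w, .letter c, rfl, rfl, fun h => absurd h (by decide)⟩
  · simp [tapeRest] at h

theorem eq_two_of_tapeRest_eq_nil {ph : Fin 3} {w : List σ} (h : tapeRest ph w = []) :
    ph = 2 := by
  fin_cases ph <;> simp_all [tapeRest, tape]

end Tape

namespace ProtAut

variable {σ W Q R S : Type} (M : ProtAut σ W Q R S)

def extractorTrans : Set ((S × Fin 3) × Option σ × List (PLet W Q R) × (S × Fin 3)) :=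
  {t | (∃ s a y s' ph x ph', (s, a, y, s') ∈ M.transWr ∧ TapeMove ph a x ph' ∧
          t = ((s, ph), x, y.map wrLet, (s', ph'))) ∨
       (∃ s q r s' ph, (s, q, r, s') ∈ M.transQu ∧
          t = ((s, ph), none, [quLet q, reLet r], (s', ph)))}

theorem extractorTrans_finite [Finite Q] [Finite R] [Finite S] : M.extractorTrans.Finite := by
  let simWr : (S × Option (EndM σ) × List W × S) × Fin 3 × Fin 3 →
      (S × Fin 3) × Option σ × List (PLet W Q R) × (S × Fin 3) :=
    fun ⟨(s, a, y, s'), ph, ph'⟩ => ((s, ph), a.bind EndM.letter?, y.map wrLet, (s', ph'))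
  let simQu : (S × Q × R × S) × Fin 3 →
      (S × Fin 3) × Option σ × List (PLet W Q R) × (S × Fin 3) :=
    fun ⟨(s, q, r, s'), ph⟩ => ((s, ph), none, [quLet q, reLet r], (s', ph))
  refine (((M.transWr_fin.prod Set.finite_univ).image simWr).union
    ((Set.toFinite (M.transQu ×ˢ Set.univ)).image simQu)).subset ?_
  rintro _ (⟨s, a, y, s', ph, x, ph', ht, hm, rfl⟩ | ⟨s, q, r, s', ph, ht, rfl⟩)
  · exact .inl ⟨((s, a, y, s'), ph, ph'), ⟨ht, trivial⟩,
      by simp [simWr, hm.eq_bind_letter?]⟩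
  · exact .inr ⟨((s, q, r, s'), ph), ⟨ht, trivial⟩, rfl⟩

def extractor [Finite Q] [Finite R] [Finite S] : FST σ (PLet W Q R) (S × Fin 3) where
  init := (M.s₀, 0)
  accept := {f | f.1 ∈ M.F ∧ f.2 = 2}
  trans := M.extractorTrans
  trans_fin := M.extractorTrans_finite

theorem exists_extractorTrans_of_protStep {P : Set (List (PLet W Q R))} {s : S} {ph : Fin 3}
    {w : List σ} {qt : List W} {pc : List (PLet W Q R)} {c' : PConfig σ W Q R S}
    (hw : ph = 2 → w = []) (h : ProtStep M P (s, tapeRest ph w, qt, pc) c') :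
    ∃ x y ph' w', ((s, ph), x, y, (c'.1, ph')) ∈ M.extractorTrans ∧ w = x.toList ++ w' ∧
      c'.2.1 = tapeRest ph' w' ∧ (ph' = 2 → w' = []) ∧
      c'.2.2.2 ++ c'.2.2.1.map wrLet = pc ++ qt.map wrLet ++ y := by
  generalize hv : tapeRest ph w = v at h
  cases h with
  | @wr _ _ a y _ _ _ ht =>
    obtain ⟨x, ph', w', hm, rfl, rfl, hw'⟩ := exists_tapeMove_of_tapeRest_eq hw hv
    exact ⟨x, y.map wrLet, ph', w', .inl ⟨_, _, _, _, _, _, _, ht, hm, rfl⟩, rfl, rfl, hw',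
      by simp⟩
  | @qu _ _ q r _ _ _ ht _ =>
    exact ⟨none, [quLet q, reLet r], ph, w, .inr ⟨_, _, _, _, _, ht, rfl⟩, rfl, hv.symm, hw,
      by simp [pblock]⟩

theorem extractor_path_of_run [Finite Q] [Finite R] [Finite S] {P : Set (List (PLet W Q R))}
    {s sf : S} {ph : Fin 3} {w : List σ} {qt : List W} {pc p : List (PLet W Q R)}
    (h : Relation.ReflTransGen (ProtStep M P) (s, tapeRest ph w, qt, pc) (sf, [], [], p))
    (hw : ph = 2 → w = []) :
    ∃ out, pc ++ qt.map wrLet ++ out = p ∧ M.extractor.Path (s, ph) w out (sf, 2) := by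
  generalize hc : (s, tapeRest ph w, qt, pc) = c at h
  induction h using Relation.ReflTransGen.head_induction_on generalizing s ph w qt pc with
  | refl =>
    simp only [Prod.mk.injEq] at hc
    obtain ⟨rfl, hv, rfl, rfl⟩ := hc
    obtain rfl := eq_two_of_tapeRest_eq_nil hv
    obtain rfl := hw rfl
    exact ⟨[], by simp, .refl _⟩
  | head hstep _ ih =>
    subst hc
    obtain ⟨x, y, ph', w', ht, rfl, hv, hw', hpc⟩ :=
      M.exists_extractorTrans_of_protStep hw hstep
    obtain ⟨out, rfl, hpath⟩ := ih hw' (by rw [← hv])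
    exact ⟨y ++ out, by simp [hpc], .step ht hpath⟩

theorem extractorTrans_of_phase_two
    {t : (S × Fin 3) × Option σ × List (PLet W Q R) × (S × Fin 3)}
    (ht : t ∈ M.extractorTrans) (h : t.1.2 = 2) : t.2.1 = none ∧ t.2.2.2.2 = 2 := by
  rcases ht with ⟨_, _, _, _, _, _, _, _, hm, rfl⟩ | ⟨_, _, _, _, _, _, rfl⟩
  · subst h
    exact hm.of_phase_two
  · exact ⟨rfl, h⟩

theorem extractor_path_eq_nil_of_phase_two [Finite Q] [Finite R] [Finite S]
    {c c' : S × Fin 3} {u : List σ} {out : List (PLet W Q R)}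
    (h : M.extractor.Path c u out c') (hc : c.2 = 2) : u = [] := by
  induction h with
  | refl => rfl
  | step ht _ ih =>
    obtain ⟨rfl, hc'⟩ := M.extractorTrans_of_phase_two ht hc
    simpa using ih hc'

theorem exists_protStep_of_extractorTrans (P : ProtLang W Q R) {s s' : S} {ph ph' : Fin 3}
    {x : Option σ} {y : List (PLet W Q R)} {w : List σ} {qt : List W}
    {pc rest : List (PLet W Q R)} (ht : ((s, ph), x, y, (s', ph')) ∈ M.extractorTrans)
    (hw : ph' = 2 → w = []) (hpc : pc ∈ P.prot)
    (hrest : pc ++ qt.map wrLet ++ y ++ rest ∈ P.prot) :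
    ∃ qt' pc', pc' ∈ P.prot ∧ pc' ++ qt'.map wrLet = pc ++ qt.map wrLet ++ y ∧
      ProtStep M P.prot (s, tapeRest ph (x.toList ++ w), qt, pc)
        (s', tapeRest ph' w, qt', pc') := by
  rcases ht with ⟨_, _, z, _, _, _, _, ht, hm, heq⟩ | ⟨_, q, r, _, _, ht, heq⟩ <;>
    simp only [Prod.mk.injEq] at heq <;> obtain ⟨⟨rfl, rfl⟩, rfl, rfl, rfl, rfl⟩ := heq
  · refine ⟨qt ++ z, pc, hpc, by simp, ?_⟩
    rw [hm.tapeRest_append hw]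
    exact .wr ht
  · have hmem : pc ++ pblock qt q r ∈ P.prot :=
      P.append_pblock_mem hpc (by simpa [pblock] using hrest)
    exact ⟨[], _, hmem, by simp [pblock], by simpa using ProtStep.qu ht hmem⟩

theorem run_of_extractor_path [Finite Q] [Finite R] [Finite S] (P : ProtLang W Q R)
    {c c' : S × Fin 3} {u : List σ} {out : List (PLet W Q R)}
    (h : M.extractor.Path c u out c') {qt : List W} {pc : List (PLet W Q R)}
    (hpc : pc ∈ P.prot) (hout : pc ++ qt.map wrLet ++ out ∈ P.prot) :
    ∃ qt' pc', pc' ∈ P.prot ∧ pc' ++ qt'.map wrLet = pc ++ qt.map wrLet ++ out ∧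
      Relation.ReflTransGen (ProtStep M P.prot)
        (c.1, tapeRest c.2 u, qt, pc) (c'.1, tapeRest c'.2 [], qt', pc') := by
  induction h generalizing qt pc with
  | refl => exact ⟨qt, pc, hpc, by simp, .refl⟩
  | @step c c₁ _ x y u v ht hpath ih =>
    have hw : c₁.2 = 2 → u = [] := M.extractor_path_eq_nil_of_phase_two hpath
    obtain ⟨qt₁, pc₁, hpc₁, hout₁, hstep⟩ :=
      M.exists_protStep_of_extractorTrans P ht hw hpc (by simpa using hout)
    obtain ⟨qt', pc', hpc', hout', hrun⟩ :=
      ih (qt := qt₁) hpc₁ (by rw [hout₁]; simpa using hout)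
    exact ⟨qt', pc', hpc', by rw [hout', hout₁]; simp, .head hstep hrun⟩

theorem extractor_rel_iff [Finite Q] [Finite R] [Finite S] (P : ProtLang W Q R)
    {w : List σ} {p : List (PLet W Q R)} (hp : p ∈ P.prot) :
    M.extractor.Rel w p ↔ M.AcceptsWith P.prot w p := by
  constructor
  · rintro ⟨⟨sf, _⟩, ⟨hsf, rfl⟩, hpath⟩
    obtain ⟨qt, pc, -, hout, hrun⟩ :=
      M.run_of_extractor_path P hpath (qt := []) P.empty_mem (by simpa using hp)
    simp only [List.map_nil, List.append_nil, List.nil_append] at hout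
    obtain rfl := (P.mem_protocol _ (hout ▸ hp)).eq_nil_of_append_map_wrLet
    simp only [List.map_nil, List.append_nil] at hout
    exact ⟨sf, hsf, hout ▸ hrun⟩
  · rintro ⟨sf, hsf, hrun⟩
    obtain ⟨out, hout, hpath⟩ :=
      M.extractor_path_of_run (ph := 0) hrun (fun h => absurd h (by decide))
    exact ⟨(sf, 2), ⟨hsf, rfl⟩, by simpa using hout ▸ hpath⟩

end ProtAut

theorem stmt6_general {W Q R σ : Type} [Fintype Q] [Fintype R]
    (P : ProtLang W Q R) {S : Type} [Fintype S] (M : ProtAut σ W Q R S) :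
    ∃ (m : ℕ) (T : FST σ (PLet W Q R) (Fin m)),
      (∀ w : List σ, w ∈ M.Lang P.prot ↔ ∃ p, T.Rel w p ∧ p ∈ P.prot) ∧
      (∀ (w : List σ) (p : List (PLet W Q R)), p ∈ P.prot →
        (T.Rel w p ↔ M.AcceptsWith P.prot w p)) := by
  obtain ⟨m, T, hT⟩ := M.extractor.exists_fin_rel_eq
  have hrel {w : List σ} {p : List (PLet W Q R)} (hp : p ∈ P.prot) :
      T.Rel w p ↔ M.AcceptsWith P.prot w p :=
    hT ▸ M.extractor_rel_iff P hp
  refine ⟨m, T, fun w => ⟨?_, ?_⟩, fun w p hp => hrel hp⟩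
  · rintro ⟨p, hp, hacc⟩
    exact ⟨p, (hrel hp).2 hacc, hp⟩
  · rintro ⟨p, hT, hp⟩
    exact ⟨p, hp, (hrel hp).1 hT⟩

/-- For every language of correct protocols `PROT` and
`1NB_PROT`-automaton `M` over `σ` there exists an extractor of protocols: a transducer
`T_M` from `σ` to the protocol alphabet such that (1) `w ∈ L(M) ↔ T_M(w) ∩ PROT ≠ ∅`,
and (2) for `p ∈ PROT`, `p ∈ T_M(w)` iff `M` has an accepting run on `w` producing `p`. -/
theorem stmt6 {W Q R σ : Type} [Fintype W] [Fintype Q] [Fintype R]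
    [Nonempty Q] [Nonempty R] [Fintype σ]
    (P : ProtLang W Q R) {S : Type} [Fintype S] (M : ProtAut σ W Q R S) :
    ∃ (m : ℕ) (T : FST σ (PLet W Q R) (Fin m)),
      (∀ w : List σ, w ∈ M.Lang P.prot ↔ ∃ p, T.Rel w p ∧ p ∈ P.prot) ∧
      (∀ (w : List σ) (p : List (PLet W Q R)), p ∈ P.prot →
        (T.Rel w p ↔ M.AcceptsWith P.prot w p)) :=
  stmt6_general P M
end

section
/- Let PROT be a language of correct protocols that additionally has a reset operation, i.e., satisfies axiom (vi): there exist q ∈ Γ_qu and r ∈ Γ_re such that for all p₁, p₂ ∈ PROT, p₁ q r p₂ ∈ PROT. Then the class CL(1NB_PROT A) of languages accepted by 1NB_PROT-automata is closed under concatenation and under Kleene star: if L₁, L₂ ∈ CL(1NB_PROT A) then L₁·L₂ ∈ CL(1NB_PROT A) and L₁* ∈ CL(1NB_PROT A). -/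
/-!
The sequential composition reads its input in phases. In each phase it simulates one of the
given automata on a nondeterministically chosen segment of the input, supplying virtual
endmarkers around the segment; when the simulated automaton accepts with an empty query tape, it
asks the reset query `q₀ r₀`. By (vi) every correct protocol may follow `p ++ q₀ r₀`, and then by
(iv) and (v) the responses after such an absorbing prefix are exactly those the simulated
automaton receives when run on its own, so every phase behaves like a fresh run. A finite
control, an NFA over the indices of the automata, decides which automaton runs in which phase:
concatenation is the control accepting the single word `0 1`, star the one accepting every word
over a one-letter alphabet.
-/

open Relation

namespace ProtLang

variable {W Q R : Type} (P : ProtLang W Q R)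

/-- Axiom (vi): `q₀ r₀` is a reset query. -/
def IsReset (q₀ : Q) (r₀ : R) : Prop :=
  ∀ p₁ ∈ P.prot, ∀ p₂ ∈ P.prot, p₁ ++ pblock [] q₀ r₀ ++ p₂ ∈ P.prot

def Absorbing (p₀ : List (PLet W Q R)) : Prop :=
  p₀ ∈ P.prot ∧ ∀ p ∈ P.prot, p₀ ++ p ∈ P.prot

variable {P}

theorem absorbing_nil : P.Absorbing [] :=
  ⟨P.empty_mem, fun _ hp => hp⟩

theorem IsReset.absorbing {q₀ : Q} {r₀ : R} (hrs : P.IsReset q₀ r₀) {p : List (PLet W Q R)}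
    (hp : p ∈ P.prot) : P.Absorbing (p ++ pblock [] q₀ r₀) :=
  ⟨by simpa using hrs p hp [] P.empty_mem, hrs p hp⟩

theorem Absorbing.append_pblock_mem {p₀ p : List (PLet W Q R)} (hA : P.Absorbing p₀)
    (hp : p ∈ P.prot) {u : List W} {q : Q} {r : R}
    (h : p₀ ++ (p ++ pblock u q r) ∈ P.prot) : p ++ pblock u q r ∈ P.prot := by
  obtain ⟨r', hr'⟩ := P.extend p hp u q
  have hr'₀ : p₀ ++ p ++ pblock u q r' ∈ P.prot := by
    simpa only [List.append_assoc] using hA.2 _ hr'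
  have : r = r' := P.resp_unique (p₀ ++ p) u q r' r [] hr'₀ (by simpa using h)
  exact this ▸ hr'

end ProtLang

namespace ProtAut

variable {σ W Q R S T : Type}

def AcceptsFrom (M : ProtAut σ W Q R S) (P : Set (List (PLet W Q R)))
    (c : PConfig σ W Q R S) : Prop :=
  ∃ pf ∈ P, ∃ sf ∈ M.F, ReflTransGen (ProtStep M P) c (sf, [], [], pf)

def map (M : ProtAut σ W Q R S) (f : S ↪ T) : ProtAut σ W Q R T where
  isWr t := ∃ s, f s = t ∧ M.isWr s
  s₀ := f M.s₀
  F := f '' M.F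
  s₀_not_F := f.injective.mem_set_image.not.2 M.s₀_not_F
  transWr := (fun t => (f t.1, t.2.1, t.2.2.1, f t.2.2.2)) '' M.transWr
  transQu := (fun t => (f t.1, t.2.1, t.2.2.1, f t.2.2.2)) '' M.transQu
  wr_src := by rintro _ ⟨t, ht, rfl⟩; exact ⟨t.1, rfl, M.wr_src t ht⟩
  qu_src := by
    rintro _ ⟨t, ht, rfl⟩ ⟨s, hs, hW⟩
    exact M.qu_src t ht (f.injective hs ▸ hW)
  qu_tgt := by rintro _ ⟨t, ht, rfl⟩; exact ⟨t.2.2.2, rfl, M.qu_tgt t ht⟩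
  transWr_fin := M.transWr_fin.image _

variable {M : ProtAut σ W Q R S} {f : S ↪ T} {P : Set (List (PLet W Q R))}

theorem protStep_map {c c' : PConfig σ W Q R S} (h : ProtStep M P c c') :
    ProtStep (M.map f) P (Prod.map f id c) (Prod.map f id c') := by
  cases h with
  | wr h => exact .wr ⟨_, h, rfl⟩
  | qu h hm => exact .qu ⟨_, h, rfl⟩ hm

theorem exists_protStep_of_map {c : PConfig σ W Q R S} {d : PConfig σ W Q R T}
    (h : ProtStep (M.map f) P (Prod.map f id c) d) :
    ∃ c', d = Prod.map f id c' ∧ ProtStep M P c c' := by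
  obtain ⟨s, v, u, p⟩ := c
  generalize hc : Prod.map f id (s, v, u, p) = c₁ at h
  cases h with
  | wr h =>
    obtain ⟨⟨s₁, a, x, s'⟩, hT, he⟩ := h
    simp only [Prod.map, id, Prod.mk.injEq] at hc he
    obtain ⟨rfl, rfl, rfl, rfl⟩ := he
    obtain ⟨hs, rfl, rfl, rfl⟩ := hc
    exact ⟨(s', _, _, _), rfl, f.injective hs ▸ .wr hT⟩
  | qu h hm =>
    obtain ⟨⟨s₁, q, r, s'⟩, hT, he⟩ := h
    simp only [Prod.map, id, Prod.mk.injEq] at hc he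
    obtain ⟨rfl, rfl, rfl, rfl⟩ := he
    obtain ⟨hs, rfl, rfl, rfl⟩ := hc
    exact ⟨(s', _, _, _), rfl, f.injective hs ▸ .qu hT hm⟩

theorem exists_reflTransGen_of_map {c : PConfig σ W Q R S} {d : PConfig σ W Q R T}
    (h : ReflTransGen (ProtStep (M.map f) P) (Prod.map f id c) d) :
    ∃ c', d = Prod.map f id c' ∧ ReflTransGen (ProtStep M P) c c' := by
  generalize hc : Prod.map f id c = c₁ at h
  induction h generalizing c with
  | refl => exact ⟨c, hc.symm, .refl⟩
  | tail _ hstep ih =>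
    obtain ⟨c', rfl, hrun⟩ := ih hc
    obtain ⟨c'', rfl, hstep'⟩ := exists_protStep_of_map hstep
    exact ⟨c'', rfl, hrun.tail hstep'⟩

theorem lang_map : (M.map f).Lang P = M.Lang P := by
  ext w
  constructor
  · rintro ⟨p, hp, _, ⟨sf, hsf, rfl⟩, hrun⟩
    obtain ⟨⟨sf', v, u, p'⟩, he, hrun'⟩ :=
      exists_reflTransGen_of_map (c := (M.s₀, tape w, [], [])) hrun
    simp only [Prod.map, id, Prod.mk.injEq] at he
    obtain ⟨hs, rfl, rfl, rfl⟩ := he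
    exact ⟨p, hp, sf', f.injective hs ▸ hsf, hrun'⟩
  · rintro ⟨p, hp, sf, hsf, hrun⟩
    exact ⟨p, hp, f sf, ⟨sf, hsf, rfl⟩, hrun.lift (Prod.map f id) fun _ _ => protStep_map⟩

end ProtAut

theorem lang_mem_protCL {σ W Q R S : Type} [Fintype S] (P : ProtLang W Q R)
    (M : ProtAut σ W Q R S) : M.Lang P.prot ∈ ProtCL P σ :=
  ⟨_, M.map (Fintype.equivFin S).toEmbedding, ProtAut.lang_map.symm⟩

inductive Mark
  | pre
  | mid
  | post
  deriving DecidableEq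

instance : Fintype Mark where
  elems := {.pre, .mid, .post}
  complete m := by cases m <;> simp

/-- `TapeRel t m w`: the simulated machine has tape `t` at position `m` while the real input
still holds the rest `w` of its segment. -/
inductive TapeRel {σ : Type} : List (EndM σ) → Mark → List σ → Prop
  | pre (w : List σ) : TapeRel (tape w) .pre w
  | mid (w : List σ) : TapeRel (w.map EndM.lt ++ [EndM.rmark]) .mid w
  | post : TapeRel [] .post []

/-- `VRead a m b m'`: a simulated move reading `a` at position `m` is carried out by reading
`b` from the real input, after which the position is `m'`. Only letters are really read. -/
inductive VRead {σ : Type} : Option (EndM σ) → Mark → Option (EndM σ) → Mark → Prop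
  | eps (m : Mark) : VRead none m none m
  | lmark : VRead (some .lmark) .pre none .mid
  | letter (c : σ) : VRead (some (.lt c)) .mid (some (.lt c)) .mid
  | rmark : VRead (some .rmark) .mid none .post

section TapeSimulation

variable {σ : Type}

theorem VRead.eq_none_or_eq {a b : Option (EndM σ)} {m m' : Mark} (h : VRead a m b m') :
    b = none ∨ b = a := by
  cases h <;> simp

theorem TapeRel.exists_vRead {t t' : List (EndM σ)} {m : Mark} {w : List σ}
    {a : Option (EndM σ)} (ht : TapeRel t m w) (ha : t = a.toList ++ t') :
    ∃ b m' w', VRead a m b m' ∧ TapeRel t' m' w' ∧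
      w.map EndM.lt = b.toList ++ w'.map EndM.lt := by
  cases ht with
  | pre w =>
    rcases a with _ | (c | _ | _) <;> cases ha
    · exact ⟨none, .pre, w, .eps _, .pre w, rfl⟩
    · exact ⟨none, .mid, w, .lmark, .mid w, rfl⟩
  | mid w =>
    rcases a with _ | (c | _ | _) <;> rcases w with _ | ⟨c', w⟩ <;> cases ha
    · exact ⟨none, .mid, [], .eps _, .mid [], rfl⟩
    · exact ⟨none, .mid, c' :: w, .eps _, .mid (c' :: w), rfl⟩
    · exact ⟨_, .mid, w, .letter _, .mid w, rfl⟩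
    · exact ⟨none, .post, [], .rmark, .post, rfl⟩
  | post =>
    rcases a with _ | _ <;> cases ha
    exact ⟨none, .post, [], .eps _, .post, rfl⟩

theorem VRead.exists_tapeRel {a b : Option (EndM σ)} {m m' : Mark} {t' : List (EndM σ)}
    {w' : List σ} (h : VRead a m b m') (ht : TapeRel t' m' w') :
    ∃ w, TapeRel (a.toList ++ t') m w ∧ b.toList ++ w'.map EndM.lt = w.map EndM.lt := by
  cases h with
  | eps => exact ⟨w', ht, rfl⟩
  | lmark => cases ht; exact ⟨w', .pre w', rfl⟩
  | letter c => cases ht; exact ⟨c :: w', by simpa using TapeRel.mid (c :: w'), rfl⟩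
  | rmark => cases ht; exact ⟨[], by simpa using TapeRel.mid ([] : List σ), rfl⟩

theorem TapeRel.post_of_nil {m : Mark} {w : List σ} (h : TapeRel [] m w) :
    m = .post ∧ w = [] := by
  generalize ht : ([] : List (EndM σ)) = t at h
  cases h <;> simp_all [tape]

end TapeSimulation

inductive SeqSplit {σ C ι : Type} (A : NFA ι C) (L : ι → Set (List σ)) : C → List σ → Prop
  | accept {c : C} : c ∈ A.accept → SeqSplit A L c []
  | phase {c c' : C} {i : ι} {w v : List σ} : c' ∈ A.step c i → w ∈ L i →
      SeqSplit A L c' v → SeqSplit A L c (w ++ v)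

theorem tape_injective {σ : Type} : Function.Injective (tape : List σ → List (EndM σ)) := by
  intro w w' h
  simp only [tape, List.cons.injEq, List.append_cancel_right_eq, true_and] at h
  exact List.map_injective_iff.2 (fun _ _ h => by injection h) h

/-- States of the sequential composition. In `run c i s m k` the composition simulates `M i`
in state `s` at position `m`, `k` records whether the query tape is empty, and `c` is the control
state reached once this phase ends. -/
inductive SeqState (C ι S : Type)
  | init
  | hub (c : C)
  | run (c : C) (i : ι) (s : S) (m : Mark) (k : Bool)
  | reset (c : C)
  | fin
  deriving Fintype

section SeqAut

variable {σ W Q R S C ι : Type} (A : NFA ι C) (M : ι → ProtAut σ W Q R S) (q₀ : Q) (r₀ : R)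

inductive SeqWr : SeqState C ι S → Option (EndM σ) → List W → SeqState C ι S → Prop
  | start {c : C} : c ∈ A.start → SeqWr .init (some .lmark) [] (.hub c)
  | enter {c c' : C} {i : ι} : c' ∈ A.step c i →
      SeqWr (.hub c) none [] (.run c' i (M i).s₀ .pre true)
  | finish {c : C} : c ∈ A.accept → SeqWr (.hub c) (some .rmark) [] .fin
  | sim {c : C} {i : ι} {s s' : S} {a b : Option (EndM σ)} {x : List W} {m m' : Mark}
      {k : Bool} : (s, a, x, s') ∈ (M i).transWr → VRead a m b m' →
      SeqWr (.run c i s m k) b x (.run c i s' m' (k && x.isEmpty))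
  | exit {c : C} {i : ι} {s : S} : s ∈ (M i).F → (M i).isWr s →
      SeqWr (.run c i s .post true) none [] (.reset c)

inductive SeqQu : SeqState C ι S → Q → R → SeqState C ι S → Prop
  | sim {c : C} {i : ι} {s s' : S} {q : Q} {r : R} {m : Mark} {k : Bool} :
      (s, q, r, s') ∈ (M i).transQu → SeqQu (.run c i s m k) q r (.run c i s' m true)
  | exit {c : C} {i : ι} {s : S} : s ∈ (M i).F → ¬ (M i).isWr s →
      SeqQu (.run c i s .post true) q₀ r₀ (.hub c)
  | reset {c : C} : SeqQu (.reset c) q₀ r₀ (.hub c)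

def SeqState.IsWr : SeqState C ι S → Prop
  | .run _ i s _ _ => (M i).isWr s
  | .reset _ => False
  | _ => True

theorem seqWr_finite [Fintype ι] [Fintype C] [Fintype S] :
    {t : SeqState C ι S × Option (EndM σ) × List W × SeqState C ι S |
      SeqWr A M t.1 t.2.1 t.2.2.1 t.2.2.2}.Finite := by
  have hb : ({none, some .lmark, some .rmark} ∪
      ⋃ i, (fun t => t.2.1) '' (M i).transWr : Set (Option (EndM σ))).Finite :=
    (Set.toFinite _).union (Set.finite_iUnion fun i => (M i).transWr_fin.image _)
  have hx : ({[]} ∪ ⋃ i, (fun t => t.2.2.1) '' (M i).transWr : Set (List W)).Finite :=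
    (Set.toFinite _).union (Set.finite_iUnion fun i => (M i).transWr_fin.image _)
  refine (Set.finite_univ.prod (hb.prod (hx.prod Set.finite_univ))).subset ?_
  rintro ⟨s, b, x, s'⟩ (h : SeqWr A M s b x s')
  cases h with
  | sim hT hv =>
    refine ⟨trivial, ?_, .inr (Set.mem_iUnion.2 ⟨_, _, hT, rfl⟩), trivial⟩
    rcases hv.eq_none_or_eq with rfl | rfl
    · simp
    · exact .inr (Set.mem_iUnion.2 ⟨_, _, hT, rfl⟩)
  | _ => simp

def seqAut [Fintype ι] [Fintype C] [Fintype S] : ProtAut σ W Q R (SeqState C ι S) where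
  isWr := SeqState.IsWr M
  s₀ := .init
  F := {.fin}
  s₀_not_F := by simp
  transWr := {t | SeqWr A M t.1 t.2.1 t.2.2.1 t.2.2.2}
  transQu := {t | SeqQu M q₀ r₀ t.1 t.2.1 t.2.2.1 t.2.2.2}
  wr_src := by
    rintro ⟨s, b, x, s'⟩ (h : SeqWr A M s b x s')
    cases h with
    | sim hT => exact (M _).wr_src _ hT
    | exit _ hW => exact hW
    | _ => trivial
  qu_src := by
    rintro ⟨s, q, r, s'⟩ (h : SeqQu M q₀ r₀ s q r s')
    cases h with
    | sim hT => exact (M _).qu_src _ hT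
    | exit _ hW => exact hW
    | reset => exact id
  qu_tgt := by
    rintro ⟨s, q, r, s'⟩ (h : SeqQu M q₀ r₀ s q r s')
    cases h with
    | sim hT => exact (M _).qu_tgt _ hT
    | _ => trivial
  transWr_fin := seqWr_finite A M

end SeqAut

section Soundness

variable {σ W Q R S C ι : Type} (P : ProtLang W Q R) (A : NFA ι C) (M : ι → ProtAut σ W Q R S)
  {q₀ : Q} {r₀ : R}

def SeqRestSplits (c : C) (v : List (EndM σ)) : Prop :=
  ∃ w, v = w.map EndM.lt ++ [EndM.rmark] ∧ SeqSplit A (fun i => (M i).Lang P.prot) c w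

/-- What an accepting run of the sequential composition from a configuration tells about that
configuration; it is preserved backwards along steps. In a phase, the protocol is an absorbing
prefix `p₀` followed by the protocol `pm` of the simulated machine. -/
def SeqJustified : PConfig σ W Q R (SeqState C ι S) → Prop
  | (.init, v, u, p) => u = [] → p = [] →
      ∃ c ∈ A.start, ∃ w, v = tape w ∧ SeqSplit A (fun i => (M i).Lang P.prot) c w
  | (.hub c, v, u, p) => u = [] → P.Absorbing p → SeqRestSplits P A M c v
  | (.run c i s m k, v, u, p) => ∀ p₀ pm, p = p₀ ++ pm → P.Absorbing p₀ → pm ∈ P.prot →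
      (k = true → u = []) → ∃ w v₁ t, v = w.map EndM.lt ++ v₁ ∧ TapeRel t m w ∧
        (M i).AcceptsFrom P.prot (s, t, u, pm) ∧ SeqRestSplits P A M c v₁
  | (.reset c, v, u, p) => u = [] → p ∈ P.prot → SeqRestSplits P A M c v
  | (.fin, v, _, _) => v = []

variable {P A M}

theorem seqJustified_of_seqWr {s s' : SeqState C ι S} {b : Option (EndM σ)} {x : List W}
    {v : List (EndM σ)} {u : List W} {p : List (PLet W Q R)} (h : SeqWr A M s b x s')
    (hY : SeqJustified P A M (s', v, u ++ x, p)) : SeqJustified P A M (s, b.toList ++ v, u, p) := by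
  cases h with
  | start hc =>
    rintro rfl rfl
    obtain ⟨w, rfl, hw⟩ := hY rfl ProtLang.absorbing_nil
    exact ⟨_, hc, w, rfl, hw⟩
  | enter hc =>
    rintro rfl hA
    obtain ⟨w, v₁, t, rfl, ht, hacc, w', rfl, hw'⟩ :=
      hY p [] (by simp) hA P.empty_mem fun _ => rfl
    cases ht
    exact ⟨w ++ w', by simp, .phase hc hacc hw'⟩
  | finish hc => exact fun _ _ => ⟨[], by simp [show v = [] from hY], .accept hc⟩
  | sim hT hv =>
    intro p₀ pm hp hA hpm hk
    obtain ⟨w', v₁, t', rfl, ht', ⟨pf, hpf, sf, hsf, hrun⟩, hrest⟩ :=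
      hY p₀ pm hp hA hpm (by simp_all)
    obtain ⟨w, ht, hw⟩ := hv.exists_tapeRel ht'
    exact ⟨w, v₁, _, by rw [← List.append_assoc, hw], ht,
      ⟨pf, hpf, sf, hsf, .head (.wr hT) hrun⟩, hrest⟩
  | exit hF =>
    rintro p₀ pm rfl hA hpm hk
    obtain rfl := hk rfl
    exact ⟨[], v, [], rfl, .post, ⟨pm, hpm, _, hF, .refl⟩, hY rfl (hA.2 pm hpm)⟩

theorem seqJustified_of_seqQu (hrs : P.IsReset q₀ r₀) {s s' : SeqState C ι S} {q : Q}
    {r : R} {v : List (EndM σ)} {u : List W} {p : List (PLet W Q R)}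
    (h : SeqQu M q₀ r₀ s q r s')
    (hmem : p ++ pblock u q r ∈ P.prot) (hY : SeqJustified P A M (s', v, [], p ++ pblock u q r)) :
    SeqJustified P A M (s, v, u, p) := by
  cases h with
  | sim hT =>
    rintro p₀ pm rfl hA hpm -
    have hpm' : pm ++ pblock u q r ∈ P.prot := hA.append_pblock_mem hpm (by simpa using hmem)
    obtain ⟨w, v₁, t, rfl, ht, ⟨pf, hpf, sf, hsf, hrun⟩, hrest⟩ :=
      hY p₀ (pm ++ pblock u q r) (by simp) hA hpm' fun _ => rfl
    exact ⟨w, v₁, t, rfl, ht, ⟨pf, hpf, sf, hsf, .head (.qu hT hpm') hrun⟩, hrest⟩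
  | exit hF =>
    rintro p₀ pm rfl hA hpm hk
    obtain rfl := hk rfl
    exact ⟨[], v, [], rfl, .post, ⟨pm, hpm, _, hF, .refl⟩, hY rfl (hrs.absorbing (hA.2 pm hpm))⟩
  | reset =>
    rintro rfl hp
    exact hY rfl (hrs.absorbing hp)

theorem seqJustified_of_reflTransGen [Fintype ι] [Fintype C] [Fintype S]
    (hrs : P.IsReset q₀ r₀) {X : PConfig σ W Q R (SeqState C ι S)} {pf : List (PLet W Q R)}
    (h : ReflTransGen (ProtStep (seqAut A M q₀ r₀) P.prot) X (.fin, [], [], pf)) :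
    SeqJustified P A M X := by
  induction h using ReflTransGen.head_induction_on with
  | refl => exact rfl
  | head hstep _ ih =>
    cases hstep with
    | wr hT => exact seqJustified_of_seqWr hT ih
    | qu hT hmem => exact seqJustified_of_seqQu hrs hT hmem ih

theorem seqSplit_of_mem_seqAut_lang [Fintype ι] [Fintype C] [Fintype S]
    (hrs : P.IsReset q₀ r₀) {w : List σ}
    (hw : w ∈ (seqAut A M q₀ r₀).Lang P.prot) :
    ∃ c ∈ A.start, SeqSplit A (fun i => (M i).Lang P.prot) c w := by
  obtain ⟨pf, -, _, rfl, hrun⟩ := hw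
  obtain ⟨c, hc, w', hw', hsplit⟩ := seqJustified_of_reflTransGen hrs hrun rfl rfl
  exact ⟨c, hc, tape_injective hw' ▸ hsplit⟩

end Soundness

section Completeness

variable {σ W Q R S C ι : Type} [Fintype ι] [Fintype C] [Fintype S]
  {P : ProtLang W Q R} {A : NFA ι C} {M : ι → ProtAut σ W Q R S} {q₀ : Q} {r₀ : R}

theorem protStep_seqAut_of_seqWr {s s' : SeqState C ι S} {b : Option (EndM σ)} {x : List W}
    (h : SeqWr A M s b x s') {v : List (EndM σ)} {u : List W} {p : List (PLet W Q R)} :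
    ProtStep (seqAut A M q₀ r₀) P.prot (s, b.toList ++ v, u, p) (s', v, u ++ x, p) :=
  .wr h

theorem protStep_seqAut_of_seqQu {s s' : SeqState C ι S} {q : Q} {r : R}
    (h : SeqQu M q₀ r₀ s q r s') {v : List (EndM σ)} {u : List W} {p : List (PLet W Q R)}
    (hmem : p ++ pblock u q r ∈ P.prot) :
    ProtStep (seqAut A M q₀ r₀) P.prot (s, v, u, p) (s', v, [], p ++ pblock u q r) :=
  .qu h hmem

theorem seqAut_simulates_step {c : C} {i : ι} {p₀ pm pm' : List (PLet W Q R)}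
    (hA : P.Absorbing p₀) {s s' : S} {t t' : List (EndM σ)} {u u' : List W} {m : Mark} {w : List σ}
    (h : ProtStep (M i) P.prot (s, t, u, pm) (s', t', u', pm')) (ht : TapeRel t m w) :
    ∃ m' w', TapeRel t' m' w' ∧ ∀ vr, ProtStep (seqAut A M q₀ r₀) P.prot
      (.run c i s m u.isEmpty, w.map EndM.lt ++ vr, u, p₀ ++ pm)
      (.run c i s' m' u'.isEmpty, w'.map EndM.lt ++ vr, u', p₀ ++ pm') := by
  cases h with
  | @wr _ _ _ x _ _ _ hT =>
    obtain ⟨b, m', w', hv, ht', hw⟩ := ht.exists_vRead rfl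
    refine ⟨m', w', ht', fun vr => ?_⟩
    have hk : (u ++ x).isEmpty = (u.isEmpty && x.isEmpty) := by cases u <;> rfl
    rw [hw, List.append_assoc, hk]
    exact protStep_seqAut_of_seqWr (SeqWr.sim hT hv)
  | qu hT hmem =>
    refine ⟨m, w, ht, fun vr => ?_⟩
    rw [← List.append_assoc]
    exact protStep_seqAut_of_seqQu (SeqQu.sim hT) (by simpa using hA.2 _ hmem)

theorem seqAut_simulates {c : C} {i : ι} {p₀ : List (PLet W Q R)} (hA : P.Absorbing p₀)
    {s s' : S} {t t' : List (EndM σ)} {u u' : List W} {pm pm' : List (PLet W Q R)} {m : Mark}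
    {w : List σ} (h : ReflTransGen (ProtStep (M i) P.prot) (s, t, u, pm) (s', t', u', pm'))
    (ht : TapeRel t m w) :
    ∃ m' w', TapeRel t' m' w' ∧ ∀ vr, ReflTransGen (ProtStep (seqAut A M q₀ r₀) P.prot)
      (.run c i s m u.isEmpty, w.map EndM.lt ++ vr, u, p₀ ++ pm)
      (.run c i s' m' u'.isEmpty, w'.map EndM.lt ++ vr, u', p₀ ++ pm') := by
  generalize hX : (s, t, u, pm) = X at h
  induction h using ReflTransGen.head_induction_on generalizing s t u pm m w with
  | refl =>
    simp only [Prod.mk.injEq] at hX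
    obtain ⟨rfl, rfl, rfl, rfl⟩ := hX
    exact ⟨m, w, ht, fun _ => .refl⟩
  | @head X Y hstep _ ih =>
    subst hX
    obtain ⟨s₁, t₁, u₁, pm₁⟩ := Y
    obtain ⟨m₁, w₁, ht₁, hstep'⟩ :=
      seqAut_simulates_step (A := A) (q₀ := q₀) (r₀ := r₀) (c := c) hA hstep ht
    obtain ⟨m', w', ht', hrun⟩ := ih ht₁ rfl
    exact ⟨m', w', ht', fun vr => .head (hstep' vr) (hrun vr)⟩

theorem seqAut_exit_to_hub (hrs : P.IsReset q₀ r₀) {c : C} {i : ι} {sf : S}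
    (hsf : sf ∈ (M i).F) {v : List (EndM σ)} {p : List (PLet W Q R)} (hp : p ∈ P.prot) :
    ReflTransGen (ProtStep (seqAut A M q₀ r₀) P.prot)
      (.run c i sf .post true, v, [], p) (.hub c, v, [], p ++ pblock [] q₀ r₀) := by
  have hmem := (hrs.absorbing hp).1
  by_cases hW : (M i).isWr sf
  · exact .head (protStep_seqAut_of_seqWr (SeqWr.exit hsf hW))
      (.single (protStep_seqAut_of_seqQu SeqQu.reset hmem))
  · exact .single (protStep_seqAut_of_seqQu (SeqQu.exit hsf hW) hmem)

theorem seqAut_reaches_fin_of_seqSplit (hrs : P.IsReset q₀ r₀) {c : C} {w : List σ}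
    (h : SeqSplit A (fun i => (M i).Lang P.prot) c w) {p : List (PLet W Q R)}
    (hA : P.Absorbing p) :
    ∃ pf ∈ P.prot, ReflTransGen (ProtStep (seqAut A M q₀ r₀) P.prot)
      (.hub c, w.map EndM.lt ++ [EndM.rmark], [], p) (.fin, [], [], pf) := by
  induction h generalizing p with
  | accept hc => exact ⟨p, hA.1, .single (protStep_seqAut_of_seqWr (SeqWr.finish hc))⟩
  | @phase c c' i w v hc' hw _ ih =>
    obtain ⟨pm, hpm, sf, hsf, hrun⟩ := hw
    obtain ⟨m', w', ht', hsim⟩ :=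
      seqAut_simulates (A := A) (q₀ := q₀) (r₀ := r₀) (c := c') hA hrun (.pre w)
    obtain ⟨rfl, rfl⟩ := ht'.post_of_nil
    obtain ⟨pf, hpf, hrest⟩ := ih (hrs.absorbing (hA.2 pm hpm))
    refine ⟨pf, hpf, .head (protStep_seqAut_of_seqWr (SeqWr.enter hc')) ?_⟩
    have hphase := hsim (v.map EndM.lt ++ [EndM.rmark])
    simp only [List.append_nil, List.map_nil, List.nil_append] at hphase
    simpa using hphase.trans ((seqAut_exit_to_hub hrs hsf (hA.2 pm hpm)).trans hrest)

theorem seqAut_lang (hrs : P.IsReset q₀ r₀) : (seqAut A M q₀ r₀).Lang P.prot =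
    {w | ∃ c ∈ A.start, SeqSplit A (fun i => (M i).Lang P.prot) c w} := by
  ext w
  refine ⟨seqSplit_of_mem_seqAut_lang hrs, ?_⟩
  rintro ⟨c, hc, h⟩
  obtain ⟨pf, hpf, hrun⟩ := seqAut_reaches_fin_of_seqSplit hrs h ProtLang.absorbing_nil
  exact ⟨pf, hpf, .fin, rfl, .head (protStep_seqAut_of_seqWr (SeqWr.start hc)) hrun⟩

end Completeness

section Instances

variable {σ : Type}

def starNFA : NFA Unit Unit where
  step _ _ := Set.univ
  start := Set.univ
  accept := Set.univ

def concatNFA : NFA (Fin 2) (Fin 3) where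
  step c i := {c' | c = i.castSucc ∧ c' = i.succ}
  start := {0}
  accept := {2}

theorem seqSplit_starNFA_iff {L : Unit → Set (List σ)} {c : Unit} {w : List σ} :
    SeqSplit starNFA L c w ↔ w ∈ LangStar (L ()) := by
  constructor
  · intro h
    induction h with
    | accept => exact ⟨[], by simp⟩
    | @phase _ _ i _ _ _ hw _ ih =>
      obtain ⟨ws, hws, rfl⟩ := ih
      refine ⟨_ :: ws, fun u hu => ?_, rfl⟩
      rcases List.mem_cons.1 hu with rfl | hu
      exacts [hw, hws u hu]
  · rintro ⟨ws, hws, rfl⟩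
    induction ws with
    | nil => exact .accept trivial
    | cons w ws ih =>
      exact .phase (i := ()) trivial (hws w (by simp)) (ih fun u hu => hws u (by simp [hu]))

theorem succ_mem_concatNFA_step (i : Fin 2) : i.succ ∈ concatNFA.step i.castSucc i :=
  ⟨rfl, rfl⟩

theorem seqSplit_concatNFA_iff {L : Fin 2 → Set (List σ)} {w : List σ} :
    SeqSplit concatNFA L 0 w ↔ w ∈ LangConcat (L 0) (L 1) := by
  constructor
  · intro h
    rcases h with hc | @⟨_, _, i, u, _, ⟨hi, rfl⟩, hu, h⟩
    · cases hc
    fin_cases i <;> cases hi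
    rcases h with hc | @⟨_, _, i, v, _, ⟨hi, rfl⟩, hv, h⟩
    · cases hc
    fin_cases i <;> cases hi
    rcases h with _ | @⟨_, _, i, _, _, ⟨hi, -⟩, -, -⟩
    · exact ⟨u, hu, v, hv, by simp⟩
    · fin_cases i <;> cases hi
  · rintro ⟨u, hu, v, hv, rfl⟩
    have h₂ : SeqSplit concatNFA L 2 [] := .accept rfl
    have h₁ : SeqSplit concatNFA L 1 (v ++ []) := .phase (succ_mem_concatNFA_step 1) hv h₂
    simpa using SeqSplit.phase (succ_mem_concatNFA_step 0) hu h₁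

end Instances

namespace ProtCL

variable {W Q R σ : Type} {P : ProtLang W Q R} {q₀ : Q} {r₀ : R}

theorem star_mem (hrs : P.IsReset q₀ r₀) {L : Set (List σ)} (h : L ∈ ProtCL P σ) :
    LangStar L ∈ ProtCL P σ := by
  obtain ⟨n, M, rfl⟩ := h
  convert lang_mem_protCL P (seqAut starNFA (fun _ => M) q₀ r₀) using 1
  ext w
  rw [seqAut_lang hrs, Set.mem_ofPred_eq]
  exact ⟨fun h => ⟨(), trivial, seqSplit_starNFA_iff.2 h⟩,
    fun ⟨_, _, h⟩ => seqSplit_starNFA_iff.1 h⟩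

theorem concat_mem (hrs : P.IsReset q₀ r₀) {L₁ L₂ : Set (List σ)} (h₁ : L₁ ∈ ProtCL P σ)
    (h₂ : L₂ ∈ ProtCL P σ) : LangConcat L₁ L₂ ∈ ProtCL P σ := by
  obtain ⟨n₁, M₁, rfl⟩ := h₁
  obtain ⟨n₂, M₂, rfl⟩ := h₂
  convert lang_mem_protCL P (seqAut concatNFA
    ![M₁.map Function.Embedding.inl, M₂.map Function.Embedding.inr] q₀ r₀) using 1
  ext w
  rw [seqAut_lang hrs, Set.mem_ofPred_eq, show concatNFA.start = {0} from rfl]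
  simp [seqSplit_concatNFA_iff, ProtAut.lang_map]

end ProtCL

theorem stmt9_general {W Q R : Type} (P : ProtLang W Q R)
    (hreset : ∃ (q : Q) (r : R), ∀ p₁ ∈ P.prot, ∀ p₂ ∈ P.prot,
        p₁ ++ pblock [] q r ++ p₂ ∈ P.prot)
    (σ : Type) (L₁ L₂ : Set (List σ))
    (h₁ : L₁ ∈ ProtCL P σ) (h₂ : L₂ ∈ ProtCL P σ) :
    LangConcat L₁ L₂ ∈ ProtCL P σ ∧ LangStar L₁ ∈ ProtCL P σ := by
  obtain ⟨q₀, r₀, hrs⟩ := hreset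
  exact ⟨ProtCL.concat_mem hrs h₁ h₂, ProtCL.star_mem hrs h₁⟩

/-- If the language of correct protocols `PROT` additionally has a
reset operation (axiom (vi)), then the class of `1NB_PROT`-recognizable languages is
closed under concatenation and Kleene star. -/
theorem stmt9 {W Q R : Type} [Fintype W] [Fintype Q] [Fintype R]
    [Nonempty Q] [Nonempty R] (P : ProtLang W Q R)
    (hreset : ∃ (q : Q) (r : R), ∀ p₁ ∈ P.prot, ∀ p₂ ∈ P.prot,
        p₁ ++ pblock [] q r ++ p₂ ∈ P.prot)
    (σ : Type) [Fintype σ] (L₁ L₂ : Set (List σ))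
    (h₁ : L₁ ∈ ProtCL P σ) (h₂ : L₂ ∈ ProtCL P σ) :
    LangConcat L₁ L₂ ∈ ProtCL P σ ∧ LangStar L₁ ∈ ProtCL P σ :=
  stmt9_general P hreset σ L₁ L₂ h₁ h₂
end

section
/- Let β : {0,1}* → {0,1}* be the monoid morphism with β(0) = 01 and β(1) = 10, and let sq(x) = β(x)11β(x)11. For every set X ⊆ {0,1}* there exist languages L, W ⊆ {0,1}* with the following properties: (1) sq(x) ∈ L for every x ∈ X, and sq(x) ∉ L for every x ∉ X; (2) every infinite regular language over {0,1} contains a word of L ∩ W and a word of W ∖ L; (3) W is polynomially sparse: there is a constant c such that for all n ≥ 1 the number of words of W of length at most n is at most n^c + c; (4) for all u, v ∈ {0,1}* with |u| = |v| and u ≠ v, if uv ∉ W then uv ∈ L if and only if u is lexicographically smaller than v; (5) every word of odd length not in W belongs to L, and every word of the form xx (x ∈ {0,1}*) that is neither in sq({0,1}*) nor in W belongs to L. (This is the combinatorial content of the paper's Lemma on the existence of a language L satisfying Requirements 1–5; the polynomial-time computability clauses are omitted.) -/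
/-- The monoid morphism `β : {0,1}* → {0,1}*` with `β(0) = 01`, `β(1) = 10`
(`0 = false`, `1 = true`). -/
def betaMor (x : List Bool) : List Bool :=
  x.flatMap fun b => if b then [true, false] else [false, true]

/-- `sq(x) = β(x)·11·β(x)·11`. -/
def sqWord (x : List Bool) : List Bool :=
  betaMor x ++ [true, true] ++ betaMor x ++ [true, true]

/-- For equal-length binary words, `u` is lexicographically smaller than `v`:
at the first position where they differ, `u` has `0` and `v` has `1`. -/
def LexLt (u v : List Bool) : Prop :=
  ∃ i : ℕ, i < u.length ∧ u.take i = v.take i ∧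
    u[i]? = some false ∧ v[i]? = some true

/-!
Take for `W` the words `x y^k z` with `y ≠ ε` and `k ≥ 2^(|x|+|y|+|z|)`. Such a word of length
at most `n` is determined by `k ≤ n` and by `x`, `y`, `z`, which have length at most `log₂ n`,
so `W` is polynomially sparse; yet by the pumping lemma every infinite regular language contains
all `x y^k z` for some `y ≠ ε`, and hence words of `W`. On `W` outside `sq({0,1}*)`, membership
in `L` is decided by the parity of `⌊log₂ |w|⌋`, which takes both values infinitely often along
the arithmetic progression `|x y^k z|`. This rule must not touch `sq`-words, but since the halves
`β(u)11` of `sq`-words form a prefix code, at most one `x y^k z` with `k ≥ |z|` is a `sq`-word.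
Elsewhere `L` is prescribed by Requirements 4 and 5, which are consistent because a word of even
length has a unique splitting into halves.
-/

open Set

section Pumping

variable {α : Type*}

def pumpWord (x y z : List α) (k : ℕ) : List α := x ++ (List.replicate k y).flatten ++ z

lemma length_pumpWord (x y z : List α) (k : ℕ) :
    (pumpWord x y z k).length = x.length + k * y.length + z.length := by
  simp [pumpWord, List.length_flatten, List.map_replicate]
  ring

lemma flatten_replicate_prefix (y : List α) {k l : ℕ} (h : k ≤ l) :
    (List.replicate k y).flatten <+: (List.replicate l y).flatten := by
  rw [← Nat.add_sub_cancel' h, List.replicate_add, List.flatten_append]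
  exact List.prefix_append _ _

theorem DFA.exists_forall_pumpWord_mem_accepts [Finite α] {σ : Type*} [Fintype σ] (M : DFA α σ)
    (hinf : (M.accepts : Set (List α)).Infinite) :
    ∃ x y z, y ≠ [] ∧ ∀ k, pumpWord x y z k ∈ M.accepts := by
  obtain ⟨w, hw, hlen⟩ : ∃ w ∈ M.accepts, Fintype.card σ ≤ w.length := by
    by_contra! h
    exact hinf ((List.finite_length_lt α _).subset h)
  obtain ⟨x, y, z, -, -, hy, hsub⟩ := M.pumping_lemma hw hlen
  refine ⟨x, y, z, hy, fun k => hsub ?_⟩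
  refine Language.mem_mul.mpr ⟨x ++ (List.replicate k y).flatten, ?_, z, rfl, rfl⟩
  refine Language.mem_mul.mpr ⟨x, rfl, _, Language.mem_kstar.mpr ⟨_, rfl, ?_⟩, rfl⟩
  exact fun _ hv => List.eq_of_mem_replicate hv

end Pumping

lemma prefix_of_append_self_eq {α : Type*} {h p z : List α} (e : h ++ h = p ++ z)
    (hz : z.length ≤ p.length) : h <+: p := by
  have hlen := congrArg List.length e
  simp only [List.length_append] at hlen
  exact List.prefix_of_prefix_length_le (e ▸ List.prefix_append h h) (List.prefix_append p z)
    (by omega)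

lemma eq_of_append_eq_append_of_length_eq {α : Type*} {u v u' v' : List α}
    (h : u ++ v = u' ++ v') (hu : u.length = v.length) (hu' : u'.length = v'.length) :
    u = u' ∧ v = v' :=
  List.append_inj h (by have := congrArg List.length h; simp at this; omega)

section Square

@[simp] lemma betaMor_nil : betaMor [] = [] := rfl

lemma betaMor_cons (b : Bool) (t : List Bool) :
    betaMor (b :: t) = [b, !b] ++ betaMor t := by
  cases b <;> rfl

lemma length_betaMor (x : List Bool) : (betaMor x).length = 2 * x.length := by
  simp [betaMor, List.length_flatMap, apply_ite List.length, Nat.mul_comm]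

def sqHalf (x : List Bool) : List Bool := betaMor x ++ [true, true]

lemma sqWord_eq_sqHalf_append (x : List Bool) : sqWord x = sqHalf x ++ sqHalf x := by
  simp [sqWord, sqHalf]

lemma length_sqWord (x : List Bool) : (sqWord x).length = 4 * x.length + 4 := by
  simp [sqWord, length_betaMor]
  ring

/-- The halves `β(x)11` form a prefix code: `11` never occurs at an even position of `β(x)`. -/
lemma eq_of_sqHalf_prefix {u v : List Bool} (h : sqHalf u <+: sqHalf v) : u = v := by
  induction u generalizing v with
  | nil =>
    cases v with
    | nil => rfl
    | cons c v => cases c <;> simp [sqHalf, betaMor_cons] at h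
  | cons b u ih =>
    cases v with
    | nil =>
      have := h.length_le
      simp [sqHalf, length_betaMor] at this
    | cons c v =>
      simp only [sqHalf, betaMor_cons, List.cons_append, List.nil_append,
        List.cons_prefix_cons] at h
      obtain ⟨rfl, -, h⟩ := h
      rw [ih h]

lemma sqWord_injective : Function.Injective sqWord := fun u v h => by
  rw [sqWord_eq_sqHalf_append, sqWord_eq_sqHalf_append] at h
  exact eq_of_sqHalf_prefix
    ((eq_of_append_eq_append_of_length_eq h rfl rfl).1 ▸ List.prefix_refl _)

lemma eq_of_append_mem_range_sqWord {u v : List Bool} (h : u ++ v ∈ range sqWord)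
    (hlen : u.length = v.length) : u = v := by
  obtain ⟨x, hx⟩ := h
  rw [sqWord_eq_sqHalf_append] at hx
  obtain ⟨rfl, rfl⟩ := eq_of_append_eq_append_of_length_eq hx.symm hlen rfl
  rfl

lemma notMem_range_sqWord_of_odd {w : List Bool} (hw : Odd w.length) :
    w ∉ range sqWord := by
  rintro ⟨x, rfl⟩
  rw [length_sqWord, Nat.odd_iff] at hw
  omega

lemma eq_of_pumpWord_mem_range_sqWord {x y z : List Bool} (hy : y ≠ []) {k l : ℕ}
    (hk : z.length ≤ k) (hl : z.length ≤ l) (hks : pumpWord x y z k ∈ range sqWord)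
    (hls : pumpWord x y z l ∈ range sqWord) : k = l := by
  have half_prefix : ∀ {m u}, m ≤ max k l → z.length ≤ m → sqWord u = pumpWord x y z m →
      sqHalf u <+: x ++ (List.replicate (max k l) y).flatten := by
    intro m u hm hzm hu
    rw [sqWord_eq_sqHalf_append, pumpWord] at hu
    refine (prefix_of_append_self_eq hu ?_).trans
      ((List.prefix_append_right_inj x).mpr (flatten_replicate_prefix y hm))
    simp only [List.length_append, List.length_flatten, List.map_replicate, List.sum_replicate,
      smul_eq_mul]
    nlinarith [List.length_pos_iff.mpr hy]
  obtain ⟨u, hu⟩ := hks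
  obtain ⟨v, hv⟩ := hls
  have huv : u = v := by
    rcases List.prefix_or_prefix_of_prefix (half_prefix (le_max_left k l) hk hu)
      (half_prefix (le_max_right k l) hl hv) with h | h
    exacts [eq_of_sqHalf_prefix h, (eq_of_sqHalf_prefix h).symm]
  have := congrArg List.length (hu.symm.trans (huv ▸ hv))
  rw [length_pumpWord, length_pumpWord] at this
  exact Nat.eq_of_mul_eq_mul_right (List.length_pos_iff.mpr hy) (by omega)

end Square

lemma exists_add_mul_mem_Ico {A p lo : ℕ} (hp : 0 < p) (hA : A ≤ lo) :
    ∃ k, lo ≤ A + k * p ∧ A + k * p < lo + p := by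
  have hex : ∃ k, lo ≤ A + k * p := ⟨lo, by nlinarith⟩
  refine ⟨Nat.find hex, Nat.find_spec hex, ?_⟩
  rcases Nat.eq_zero_or_eq_succ_pred (Nat.find hex) with h | h
  · rw [h]; omega
  · have hprev := Nat.find_min hex (Nat.pred_lt_of_lt (by omega : 0 < Nat.find hex))
    rw [h, Nat.succ_mul]
    omega

lemma exists_gt_even_log_add_mul_iff (A p K : ℕ) (hp : 0 < p) (b : Bool) :
    ∃ k, K < k ∧ (Even (Nat.log 2 (A + k * p)) ↔ b) := by
  set j := 2 * (A + (K + 1) * p) + if b then 0 else 1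
  have hKp : (K + 1) * p = K * p + p := Nat.succ_mul K p
  have hNj : A + (K + 1) * p ≤ 2 ^ j := (Nat.lt_two_pow_self.trans_le' (by omega)).le
  obtain ⟨k, hlo, hhi⟩ := exists_add_mul_mem_Ico hp (by omega : A ≤ 2 ^ j)
  refine ⟨k, ?_, ?_⟩
  · by_contra! hk
    have := Nat.mul_le_mul_right p hk
    omega
  · have hlog : Nat.log 2 (A + k * p) = j :=
      Nat.log_eq_of_pow_le_of_lt_pow hlo (by rw [pow_succ]; omega)
    cases b <;> simp [hlog, j]

def pumpLang : Set (List Bool) :=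
  {w | ∃ x y z k, y ≠ [] ∧ 2 ^ (x.length + y.length + z.length) ≤ k ∧ w = pumpWord x y z k}

lemma exists_pumpWord_mem_pumpLang_even_log_iff {x y z : List Bool} (hy : y ≠ []) (b : Bool) :
    ∃ k, pumpWord x y z k ∈ pumpLang ∧ pumpWord x y z k ∉ range sqWord ∧
      (Even (Nat.log 2 (pumpWord x y z k).length) ↔ b) := by
  have hpar : {k | Even (Nat.log 2 (pumpWord x y z k).length) ↔ b}.Infinite := by
    refine Set.infinite_of_forall_exists_gt fun K => ?_
    obtain ⟨k, hk, hkb⟩ := exists_gt_even_log_add_mul_iff (x.length + z.length) y.length K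
      (List.length_pos_iff.mpr hy) b
    refine ⟨k, ?_, hk⟩
    rwa [Set.mem_ofPred_eq, length_pumpWord, add_right_comm]
  have hsq : {k | z.length ≤ k ∧ pumpWord x y z k ∈ range sqWord}.Subsingleton :=
    fun k hk l hl => eq_of_pumpWord_mem_range_sqWord hy hk.1 hl.1 hk.2 hl.2
  obtain ⟨k, hkb, hk⟩ := (hpar.sdiff
    ((Set.finite_lt_nat (2 ^ (x.length + y.length + z.length) + z.length)).union
      hsq.finite)).nonempty
  simp only [Set.mem_union, Set.mem_ofPred_eq, not_or, not_lt, not_and] at hk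
  exact ⟨k, ⟨x, y, z, k, hy, le_self_add.trans hk.1, rfl⟩, hk.2 (le_add_self.trans hk.1), hkb⟩

lemma ncard_length_le_le {α : Type*} [Fintype α] [Inhabited α] (m : ℕ) :
    {l : List α | l.length ≤ m}.ncard ≤ Fintype.card α ^ m * (m + 1) := by
  let f : List.Vector α m × Fin (m + 1) → List α := fun q => q.1.toList.take q.2
  have hsub : {l : List α | l.length ≤ m} ⊆ range f := fun l (hl : l.length ≤ m) =>
    ⟨(⟨l ++ List.replicate (m - l.length) default, by simp; omega⟩, ⟨l.length, by omega⟩),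
      by simp [f]⟩
  calc _ ≤ (range f).ncard := Set.ncard_le_ncard hsub (Set.finite_range f)
    _ ≤ Nat.card (List.Vector α m × Fin (m + 1)) := by
      rw [← Nat.card_coe_set_eq]; exact Finite.card_range_le f
    _ = Fintype.card α ^ m * (m + 1) := by simp [Nat.card_eq_fintype_card, card_vector]

lemma ncard_pumpLang_length_le {n : ℕ} (hn : 1 ≤ n) :
    {w ∈ pumpLang | w.length ≤ n}.ncard ≤ n ^ 8 + 8 := by
  set T := {l : List Bool | l.length ≤ Nat.log 2 n}
  have hT : T.Finite := List.finite_length_le Bool _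
  have hTcard : T.ncard ≤ n ^ 2 := by
    have h2 := Nat.pow_log_le_self 2 (by omega : n ≠ 0)
    have h1 := (Nat.lt_two_pow_self (n := Nat.log 2 n)).trans_le h2
    refine (ncard_length_le_le _).trans ?_
    rw [Fintype.card_bool, sq]
    exact Nat.mul_le_mul h2 h1
  have hsub : {w ∈ pumpLang | w.length ≤ n} ⊆
      (fun q : List Bool × List Bool × List Bool × ℕ => pumpWord q.1 q.2.1 q.2.2.1 q.2.2.2) ''
        (T ×ˢ T ×ˢ T ×ˢ Iic n) := by
    rintro w ⟨⟨x, y, z, k, hy, hk, rfl⟩, hlen⟩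
    rw [length_pumpWord] at hlen
    have hkn : k ≤ n := by nlinarith [List.length_pos_iff.mpr hy]
    have hs := Nat.le_log_of_pow_le one_lt_two (hk.trans hkn)
    have mem_T : ∀ l : List Bool, l.length ≤ Nat.log 2 n → l ∈ T := fun _ h => h
    exact ⟨(x, y, z, k), ⟨mem_T x (by omega), mem_T y (by omega), mem_T z (by omega), hkn⟩, rfl⟩
  have hfin := hT.prod (hT.prod (hT.prod (Set.finite_Iic n)))
  calc _ ≤ _ := Set.ncard_le_ncard hsub (hfin.image _)
    _ ≤ (T ×ˢ T ×ˢ T ×ˢ Iic n).ncard := Set.ncard_image_le hfin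
    _ = T.ncard ^ 3 * (n + 1) := by
      rw [Set.ncard_prod, Set.ncard_prod, Set.ncard_prod, ← Finset.coe_Iic, Set.ncard_coe_finset,
        Nat.card_Iic]
      ring
    _ ≤ (n ^ 2) ^ 3 * (n + 1) := by gcongr
    _ ≤ n ^ 8 + 8 := by
      rcases hn.eq_or_lt with rfl | h2
      · norm_num
      · calc (n ^ 2) ^ 3 * (n + 1) ≤ (n ^ 2) ^ 3 * n ^ 2 := by gcongr; nlinarith
          _ ≤ n ^ 8 + 8 := by ring_nf; omega

def lang (X : Set (List Bool)) : Set (List Bool) :=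
  sqWord '' X ∪ {w | w ∈ pumpLang ∧ w ∉ range sqWord ∧ Even (Nat.log 2 w.length)} ∪
  {w | w ∉ pumpLang ∧ w ∉ range sqWord ∧ (Odd w.length ∨
    ∃ u v, w = u ++ v ∧ u.length = v.length ∧ (LexLt u v ∨ u = v))}

section Lang

variable {X : Set (List Bool)} {w : List Bool}

lemma sqWord_mem_lang_iff (x : List Bool) : sqWord x ∈ lang X ↔ x ∈ X := by
  simp [lang, sqWord_injective.eq_iff]

lemma mem_lang_iff_of_mem_pumpLang (hW : w ∈ pumpLang) (hsq : w ∉ range sqWord) :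
    w ∈ lang X ↔ Even (Nat.log 2 w.length) := by
  have : w ∉ sqWord '' X := fun h => hsq (image_subset_range _ _ h)
  simp only [lang, Set.mem_union, Set.mem_ofPred_eq, hW, hsq, this, not_true, not_false_eq_true,
    true_and, false_and, false_or, or_false]

lemma mem_lang_iff_of_notMem_pumpLang (hW : w ∉ pumpLang) (hsq : w ∉ range sqWord) :
    w ∈ lang X ↔
      Odd w.length ∨ ∃ u v, w = u ++ v ∧ u.length = v.length ∧ (LexLt u v ∨ u = v) := by
  have : w ∉ sqWord '' X := fun h => hsq (image_subset_range _ _ h)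
  simp only [lang, Set.mem_union, Set.mem_ofPred_eq, hW, hsq, this, not_false_eq_true, true_and,
    false_and, false_or]

lemma append_mem_lang_iff {u v : List Bool} (hlen : u.length = v.length) (hne : u ≠ v)
    (hW : u ++ v ∉ pumpLang) : u ++ v ∈ lang X ↔ LexLt u v := by
  rw [mem_lang_iff_of_notMem_pumpLang hW fun h => hne (eq_of_append_mem_range_sqWord h hlen)]
  constructor
  · rintro (hodd | ⟨u', v', he, hlen', hlex | rfl⟩)
    · rw [List.length_append, hlen, Nat.odd_iff] at hodd
      omega
    · obtain ⟨rfl, rfl⟩ := eq_of_append_eq_append_of_length_eq he hlen hlen'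
      exact hlex
    · obtain ⟨rfl, rfl⟩ := eq_of_append_eq_append_of_length_eq he hlen hlen'
      exact absurd rfl hne
  · exact fun hlex => Or.inr ⟨u, v, rfl, hlen, Or.inl hlex⟩

end Lang

/-- For every set `X ⊆ {0,1}*` there exist languages `L, W ⊆ {0,1}*`
satisfying Requirements 1–5 of the paper: (1) `sqWord` separates `X` via `L`; (2) every
infinite regular language meets both `L ∩ W` and `W ∖ L`; (3) `W` is polynomially
sparse; (4) outside `W`, concatenations `uv` of distinct equal-length words lie in `L`
exactly when `u` is lexicographically smaller than `v`; (5) outside `W`, all words of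
odd length, and all squares `xx` not of the form `sqWord(·)`, lie in `L`. -/
theorem stmt13 (X : Set (List Bool)) :
    ∃ L W : Set (List Bool),
      (∀ x : List Bool, (x ∈ X → sqWord x ∈ L) ∧ (x ∉ X → sqWord x ∉ L)) ∧
      (∀ R : Set (List Bool),
        (∃ (n : ℕ) (D : DFA Bool (Fin n)), ∀ w, w ∈ D.accepts ↔ w ∈ R) →
        R.Infinite →
        (∃ w ∈ R, w ∈ L ∩ W) ∧ (∃ w ∈ R, w ∈ W \ L)) ∧
      (∃ c : ℕ, ∀ n : ℕ, 1 ≤ n → {w ∈ W | w.length ≤ n}.ncard ≤ n ^ c + c) ∧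
      (∀ u v : List Bool, u.length = v.length → u ≠ v → u ++ v ∉ W →
        (u ++ v ∈ L ↔ LexLt u v)) ∧
      (∀ w : List Bool, Odd w.length → w ∉ W → w ∈ L) ∧
      (∀ x : List Bool, x ++ x ∉ Set.range sqWord → x ++ x ∉ W → x ++ x ∈ L) := by
  refine ⟨lang X, pumpLang, fun x => ⟨(sqWord_mem_lang_iff x).2, mt (sqWord_mem_lang_iff x).1⟩,
    ?_, ⟨8, fun n => ncard_pumpLang_length_le⟩, fun u v => append_mem_lang_iff,
    fun w hodd hW => (mem_lang_iff_of_notMem_pumpLang hW (notMem_range_sqWord_of_odd hodd)).2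
      (Or.inl hodd),
    fun x hsq hW =>
      (mem_lang_iff_of_notMem_pumpLang hW hsq).2 (Or.inr ⟨x, x, rfl, rfl, Or.inr rfl⟩)⟩
  rintro R ⟨n, D, hD⟩ hinf
  have hRD : R = D.accepts := Set.ext fun w => (hD w).symm
  subst hRD
  obtain ⟨x, y, z, hy, hpump⟩ := D.exists_forall_pumpWord_mem_accepts hinf
  obtain ⟨k, hkW, hksq, hk⟩ := exists_pumpWord_mem_pumpLang_even_log_iff (x := x) (z := z) hy true
  obtain ⟨l, hlW, hlsq, hl⟩ := exists_pumpWord_mem_pumpLang_even_log_iff (x := x) (z := z) hy false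
  exact ⟨⟨_, hpump k, (mem_lang_iff_of_mem_pumpLang hkW hksq).2 (by simpa using hk), hkW⟩,
    ⟨_, hpump l, hlW, fun h => by simpa using hl.1 ((mem_lang_iff_of_mem_pumpLang hlW hlsq).1 h)⟩⟩
end

section
/- Let A be a nondeterministic finite automaton over a finite alphabet and let s be a state of A such that s is reachable (there exists a word w with s ∈ A.evalFrom(start, w)) and coreachable (there exists a word w such that A.evalFrom({s}, w) contains an accept state). If there exists a nonempty word u with s ∈ A.evalFrom({s}, u), then the accepted language of A is infinite. Equivalently: if every state of A is reachable and coreachable and A accepts a finite language, then the transition graph of A is acyclic (no state lies on a nontrivial cycle). -/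
/-! Pump the cycle: if `x` leads from a start state to `s`, `u ≠ []` leads from `s` back to `s`
and `y` leads from `s` to an accept state, then every `x uⁿ y` is accepted, and these words have
pairwise distinct lengths. -/

theorem List.injective_append_flatten_replicate_append {α : Type*} (x y : List α) {u : List α}
    (hu : u ≠ []) : Function.Injective fun n : ℕ => x ++ (List.replicate n u).flatten ++ y := by
  intro m n hmn
  have hlen := congrArg List.length hmn
  simp only [List.length_append, List.length_flatten, List.map_replicate, List.sum_replicate,
    smul_eq_mul] at hlen
  exact Nat.eq_of_mul_eq_mul_right (List.length_pos_iff.mpr hu) (by omega)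

namespace NFA

variable {α σ : Type*} (M : NFA α σ)

theorem mem_evalFrom_append_of_mem {S : Set σ} {s t : σ} {x y : List α}
    (hs : s ∈ M.evalFrom S x) (ht : t ∈ M.evalFrom {s} y) : t ∈ M.evalFrom S (x ++ y) := by
  rw [evalFrom_append]
  exact mem_evalFrom_iff_exists.mpr ⟨s, hs, ht⟩

theorem mem_evalFrom_flatten_replicate {s : σ} {u : List α} (hu : s ∈ M.evalFrom {s} u)
    (n : ℕ) : s ∈ M.evalFrom {s} (List.replicate n u).flatten := by
  induction n with
  | zero => rfl
  | succ n ih =>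
    rw [List.replicate_succ, List.flatten_cons]
    exact M.mem_evalFrom_append_of_mem hu ih

end NFA

theorem stmt14_general {α S : Type} (A : NFA α S) (s : S)
    (hreach : ∃ w : List α, s ∈ A.evalFrom A.start w)
    (hco : ∃ w : List α, ∃ f ∈ A.accept, f ∈ A.evalFrom {s} w)
    (hcyc : ∃ u : List α, u ≠ [] ∧ s ∈ A.evalFrom {s} u) :
    {w : List α | w ∈ A.accepts}.Infinite := by
  obtain ⟨x, hx⟩ := hreach
  obtain ⟨y, f, hf, hy⟩ := hco
  obtain ⟨u, hu, hsu⟩ := hcyc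
  refine Set.infinite_of_injective_forall_mem
    (List.injective_append_flatten_replicate_append x y hu) fun n => ?_
  have hpumped := A.mem_evalFrom_append_of_mem hx (A.mem_evalFrom_flatten_replicate hsu n)
  exact NFA.mem_accepts.mpr ⟨f, hf, A.mem_evalFrom_append_of_mem hpumped hy⟩

/-- If a state `s` of an NFA `A` over a finite alphabet is reachable,
coreachable, and lies on a nontrivial cycle, then the language accepted by `A` is
infinite. -/
theorem stmt14 {α S : Type} [Fintype α] [Fintype S] (A : NFA α S) (s : S)
    (hreach : ∃ w : List α, s ∈ A.evalFrom A.start w)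
    (hco : ∃ w : List α, ∃ f ∈ A.accept, f ∈ A.evalFrom {s} w)
    (hcyc : ∃ u : List α, u ≠ [] ∧ s ∈ A.evalFrom {s} u) :
    {w : List α | w ∈ A.accepts}.Infinite :=
  stmt14_general A s hreach hco hcyc
end

section
/- Let L ⊆ {0,1}*. Let PROT_L be the language over the alphabet {0,1,#,+,−,ρ,ρ'} consisting of all concatenations of query blocks of the following three forms: u#+ with u ∈ L; u#− with u ∈ {0,1}* ∖ L; and ρρ'. Let A be a nondeterministic finite automaton over {0,1,#,+,−,ρ,ρ'} with state set S, start set I and accept set F. Define a nondeterministic finite automaton B over the alphabet {y,n,#,+,−,ρ,ρ'} with the same state set S, start set I and accept set F, whose transitions are: for a ∈ {#,+,−,ρ,ρ'}, B steps from s to s' on a iff A steps from s to s' on a; B steps from s to s' on y iff there exists u ∈ L with s' ∈ A.evalFrom({s}, u); B steps from s to s' on n iff there exists u ∈ {0,1}* ∖ L with s' ∈ A.evalFrom({s}, u). Then L(A) ∩ PROT_L ≠ ∅ if and only if L(B) ∩ ({y#+} ∪ {n#−} ∪ {ρρ'})* ≠ ∅. -/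
/-
`B` is the preimage of `A` under the substitution `σ` sending `y` to the (encoded)
words of `L`, `n` to those of `{0,1}* ∖ L`, and every other letter to itself: `B` accepts `w`
iff `A` accepts some word of `σ(w)`. Since a substitution is a semiring homomorphism of languages
that preserves unions, it commutes with the Kleene star, so
`σ((y#+ | n#− | ρρ')*) = (σ(y#+) | σ(n#−) | σ(ρρ'))* = PROT_L`.
-/

/-- The 7-letter alphabet `{0, 1, #, +, −, ρ, ρ'}` of the automaton `A`. -/
inductive ALet : Type
  | c0 | c1 | hash | plus | minus | rho | rho'
  deriving DecidableEq

/-- The 7-letter alphabet `{y, n, #, +, −, ρ, ρ'}` of the automaton `B`. -/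
inductive BLet : Type
  | y | n | hash | plus | minus | rho | rho'
  deriving DecidableEq

/-- Embedding of the binary letters `0`, `1` into `ALet`. -/
def embBit (b : Bool) : ALet := if b then ALet.c1 else ALet.c0

/-- The protocol language `PROT_L`: all concatenations of query blocks of the forms
`u#+` with `u ∈ L`, `u#−` with `u ∉ L`, and `ρρ'`. -/
def ProtL (L : Set (List Bool)) : Set (List ALet) :=
  {w | ∃ blocks : List (List ALet),
    (∀ bl ∈ blocks,
      (∃ u ∈ L, bl = u.map embBit ++ [ALet.hash, ALet.plus]) ∨
      (∃ u : List Bool, u ∉ L ∧ bl = u.map embBit ++ [ALet.hash, ALet.minus]) ∨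
      bl = [ALet.rho, ALet.rho']) ∧
    w = blocks.flatten}

/-- The NFA `B` built from `A`: same states, start and accept sets; it steps on
`#, +, −, ρ, ρ'` exactly as `A` does, on `y` along words of `L`, and on `n` along
words of `{0,1}* ∖ L`. -/
def mkB (L : Set (List Bool)) {S : Type} (A : NFA ALet S) : NFA BLet S where
  step s x :=
    match x with
    | BLet.y => {s' | ∃ u ∈ L, s' ∈ A.evalFrom {s} (u.map embBit)}
    | BLet.n => {s' | ∃ u : List Bool, u ∉ L ∧ s' ∈ A.evalFrom {s} (u.map embBit)}
    | BLet.hash => A.step s ALet.hash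
    | BLet.plus => A.step s ALet.plus
    | BLet.minus => A.step s ALet.minus
    | BLet.rho => A.step s ALet.rho
    | BLet.rho' => A.step s ALet.rho'
  start := A.start
  accept := A.accept

/-- The regular pattern `(y#+ | n#− | ρρ')*`. -/
def Pattern : Set (List BLet) :=
  {w | ∃ blocks : List (List BLet),
    (∀ bl ∈ blocks,
      bl = [BLet.y, BLet.hash, BLet.plus] ∨
      bl = [BLet.n, BLet.hash, BLet.minus] ∨
      bl = [BLet.rho, BLet.rho']) ∧
    w = blocks.flatten}

open scoped Computability

namespace Language

variable {α β : Type*}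

def subst (h : β → Language α) : Language β →+* Language α where
  toFun K := ⨆ w ∈ K, (w.map h).prod
  map_zero' := by
    ext u
    simp only [mem_iSup, exists_prop]
    exact ⟨fun ⟨w, hw, _⟩ => (notMem_zero w hw).elim, fun hu => (notMem_zero u hu).elim⟩
  map_one' := by
    ext u
    simp only [mem_iSup, mem_one, exists_prop, exists_eq_left, List.map_nil, List.prod_nil]
  map_add' K K' := by ext u; simp only [mem_iSup, mem_add, exists_prop]; grind
  map_mul' K K' := by
    ext u
    simp only [mem_iSup, mem_mul, exists_prop]
    constructor
    · rintro ⟨_, ⟨w, hw, w', hw', rfl⟩, hu⟩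
      rw [List.map_append, List.prod_append, mem_mul] at hu
      obtain ⟨v, hv, v', hv', rfl⟩ := hu
      exact ⟨v, ⟨w, hw, hv⟩, v', ⟨w', hw', hv'⟩, rfl⟩
    · rintro ⟨v, ⟨w, hw, hv⟩, v', ⟨w', hw', hv'⟩, rfl⟩
      refine ⟨w ++ w', ⟨w, hw, w', hw', rfl⟩, ?_⟩
      rw [List.map_append, List.prod_append]
      exact append_mem_mul hv hv'

theorem mem_singleton_iff {x y : List α} : x ∈ ({y} : Language α) ↔ x = y := Iff.rfl

theorem mem_map {f : α → β} {l : Language α} {x : List β} :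
    x ∈ map f l ↔ ∃ y ∈ l, y.map f = x :=
  Iff.rfl

theorem mem_subst {h : β → Language α} {K : Language β} {u : List α} :
    u ∈ subst h K ↔ ∃ w ∈ K, u ∈ (w.map h).prod := by
  simp [subst, mem_iSup]

theorem subst_iSup {ι : Sort*} (h : β → Language α) (K : ι → Language β) :
    subst h (⨆ i, K i) = ⨆ i, subst h (K i) := by
  ext u; simp only [mem_subst, mem_iSup]; grind

theorem subst_kstar (h : β → Language α) (K : Language β) : subst h K∗ = (subst h K)∗ := by
  simp only [kstar_eq_iSup_pow, subst_iSup, map_pow]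

end Language

namespace NFA

variable {α β σ : Type*}

def invSubst (M : NFA α σ) (h : β → Language α) : NFA β σ where
  step s b := ⋃ u ∈ h b, M.evalFrom {s} u
  start := M.start
  accept := M.accept

variable (M : NFA α σ) (h : β → Language α)

theorem evalFrom_invSubst (S : Set σ) (w : List β) :
    (M.invSubst h).evalFrom S w = ⋃ u ∈ (w.map h).prod, M.evalFrom S u := by
  induction w generalizing S with
  | nil =>
    ext s
    simp only [List.map_nil, List.prod_nil, Set.mem_iUnion, Language.mem_one, exists_prop,
      exists_eq_left, evalFrom_nil]
  | cons b w ih =>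
    have hstep : (M.invSubst h).stepSet S b = ⋃ u ∈ h b, M.evalFrom S u := by
      ext s
      simp only [mem_stepSet, invSubst, Set.mem_iUnion, exists_prop,
        evalFrom_eq_biUnion_singleton M S]
      grind
    ext s
    simp only [evalFrom_cons, hstep, ih, evalFrom_iUnion₂, Set.mem_iUnion, exists_prop,
      List.map_cons, List.prod_cons, Language.mem_mul]
    constructor
    · rintro ⟨v, hv, u, hu, hs⟩
      exact ⟨u ++ v, ⟨u, hu, v, hv, rfl⟩, by rwa [evalFrom_append]⟩
    · rintro ⟨_, ⟨u, hu, v, hv, rfl⟩, hs⟩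
      exact ⟨v, hv, u, hu, by rwa [← evalFrom_append]⟩

theorem mem_accepts_invSubst {w : List β} :
    w ∈ (M.invSubst h).accepts ↔ ∃ u ∈ (w.map h).prod, u ∈ M.accepts := by
  change (∃ s ∈ M.accept, s ∈ (M.invSubst h).evalFrom M.start w) ↔ _
  simp only [evalFrom_invSubst, Set.mem_iUnion, exists_prop, mem_accepts]
  grind

theorem exists_mem_accepts_invSubst_iff (K : Language β) :
    (∃ w, w ∈ (M.invSubst h).accepts ∧ w ∈ K) ↔
      ∃ u, u ∈ M.accepts ∧ u ∈ Language.subst h K := by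
  simp only [mem_accepts_invSubst, Language.mem_subst]
  grind

end NFA

/- `L` is a `Set (List Bool)` read as a `Language Bool`: `Language` lemmas about it must be
instantiated explicitly (`Language.mem_map (l := L)`), and the two membership relations in `L`
agree only up to `rfl`. -/
def querySubst (L : Set (List Bool)) : BLet → Language ALet
  | .y => Language.map embBit L
  | .n => Language.map embBit Lᶜ
  | .hash => {[.hash]}
  | .plus => {[.plus]}
  | .minus => {[.minus]}
  | .rho => {[.rho]}
  | .rho' => {[.rho']}

theorem mkB_eq_invSubst (L : Set (List Bool)) {S : Type} (A : NFA ALet S) :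
    mkB L A = A.invSubst (querySubst L) := by
  simp only [mkB, NFA.invSubst, NFA.mk.injEq, and_true]
  funext s b
  cases b
  case y | n =>
    ext t
    simp only [Set.mem_ofPred_eq, querySubst, Language.mem_map (l := L), Language.mem_map (l := Lᶜ),
      Set.iUnion_exists, Set.biUnion_and', Set.iUnion_iUnion_eq_right, Set.mem_iUnion, exists_prop]
    rfl
  all_goals simp only [querySubst, Language.mem_singleton_iff, Set.iUnion_iUnion_eq_left,
    NFA.evalFrom_singleton, NFA.stepSet_singleton]

def queryBlocks : Language BLet :=
  {[.y, .hash, .plus], [.n, .hash, .minus], [.rho, .rho']}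

theorem mem_queryBlocks {w : List BLet} :
    w ∈ queryBlocks ↔
      w = [.y, .hash, .plus] ∨ w = [.n, .hash, .minus] ∨ w = [.rho, .rho'] :=
  Iff.rfl

theorem pattern_eq_kstar : Pattern = queryBlocks∗ := by
  ext w
  refine Iff.trans ?_ Language.mem_kstar.symm
  simp only [Pattern, mem_queryBlocks]
  exact exists_congr fun _ => and_comm

theorem mem_subst_queryBlocks (L : Set (List Bool)) (u : List ALet) :
    u ∈ Language.subst (querySubst L) queryBlocks ↔
      (∃ v ∈ L, u = v.map embBit ++ [.hash, .plus]) ∨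
      (∃ v : List Bool, v ∉ L ∧ u = v.map embBit ++ [.hash, .minus]) ∨
      u = [.rho, .rho'] := by
  simp only [Language.mem_subst, mem_queryBlocks, exists_eq_or_imp, exists_eq_left, querySubst,
    List.map_cons, List.map_nil, List.prod_cons, List.prod_nil, mul_one, Language.mem_mul,
    Language.mem_map (l := L), Language.mem_map (l := Lᶜ), Language.mem_singleton_iff,
    List.cons_append, List.nil_append, ↓existsAndEq, and_true, true_and, eq_comm]
  rfl

theorem protL_eq_subst_pattern (L : Set (List Bool)) :
    ProtL L = Language.subst (querySubst L) Pattern := by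
  rw [pattern_eq_kstar, Language.subst_kstar]
  ext u
  refine Iff.trans ?_ Language.mem_kstar.symm
  simp only [ProtL, mem_subst_queryBlocks]
  exact exists_congr fun _ => and_comm

theorem stmt15_general (L : Set (List Bool)) {S : Type} (A : NFA ALet S) :
    (∃ w, w ∈ A.accepts ∧ w ∈ ProtL L) ↔
    (∃ w, w ∈ (mkB L A).accepts ∧ w ∈ Pattern) := by
  rw [protL_eq_subst_pattern, mkB_eq_invSubst]
  exact (A.exists_mem_accepts_invSubst_iff _ _).symm

/-- `L(A) ∩ PROT_L ≠ ∅` iff `L(B) ∩ (y#+ | n#− | ρρ')* ≠ ∅`. -/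
theorem stmt15 (L : Set (List Bool)) {S : Type} [Fintype S] (A : NFA ALet S) :
    (∃ w, w ∈ A.accepts ∧ w ∈ ProtL L) ↔
    (∃ w, w ∈ (mkB L A).accepts ∧ w ∈ Pattern) :=
  stmt15_general L A
end
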